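/- arXiv:1710.09493 — 7 statements merged into one kernel-verified Lean document; each statement's English description precedes it below -/
import Mathlib

section
/- Let 2 ≤ k ≤ m and n ≥ m be integers, and let F : Fin n → Set ℝ be a family of n nonempty closed bounded intervals in ℝ such that for every m-element subset M of the indices there exist k indices in M whose intervals have a common point. Then there exists a point x ∈ ℝ such that the number of indices i with x ∈ F i is at least ((k-1)/(m-1)) · n. -/
/-!
Let `A` be the largest number of intervals through a single point. Colouring the intervals
greedily in order of their left endpoints uses at most `A` colours, because the earlier intervals
meeting a given one all contain its left endpoint. The `k - 1` largest colour classes together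
contain at least `(k - 1) n / A` intervals, and no `k` of these share a point (two of them would
have the same colour), so agreeability leaves fewer than `m` of them: `(k - 1) n ≤ A (m - 1)`.
-/

open Finset

namespace Finset

variable {ι M : Type*} [AddCommMonoid M] [LinearOrder M] [IsOrderedCancelAddMonoid M]

theorem exists_subset_card_eq_forall_le (s : Finset ι) (f : ι → M) {r : ℕ} (hr : r ≤ #s) :
    ∃ t ⊆ s, #t = r ∧ ∀ x ∈ t, ∀ y ∈ s, y ∉ t → f y ≤ f x := by
  classical
  obtain ⟨t, ht, hmax⟩ := exists_max_image (powersetCard r s) (fun t => ∑ i ∈ t, f i)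
    (powersetCard_nonempty.2 hr)
  obtain ⟨hts, rfl⟩ := mem_powersetCard.1 ht
  refine ⟨t, hts, rfl, fun x hx y hys hyt => ?_⟩
  have hyt' : y ∉ t.erase x := fun h => hyt (mem_of_mem_erase h)
  have hswap : insert y (t.erase x) ∈ powersetCard #t s := by
    have := card_pos.2 ⟨x, hx⟩
    rw [mem_powersetCard, card_insert_of_notMem hyt', card_erase_of_mem hx]
    exact ⟨insert_subset hys ((erase_subset x t).trans hts), by omega⟩
  have := hmax _ hswap
  rw [sum_insert hyt', ← add_sum_erase t f hx] at this
  exact le_of_add_le_add_right this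

theorem exists_subset_card_eq_nsmul_sum_le (s : Finset ι) (f : ι → M) {r : ℕ} (hr : r ≤ #s) :
    ∃ t ⊆ s, #t = r ∧ r • ∑ i ∈ s, f i ≤ #s • ∑ i ∈ t, f i := by
  classical
  obtain ⟨t, hts, rfl, htop⟩ := exists_subset_card_eq_forall_le s f hr
  refine ⟨t, hts, rfl, ?_⟩
  have hrest : #t • ∑ y ∈ s \ t, f y ≤ #(s \ t) • ∑ x ∈ t, f x := by
    calc #t • ∑ y ∈ s \ t, f y = ∑ _x ∈ t, ∑ y ∈ s \ t, f y := (sum_const _).symm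
      _ ≤ ∑ x ∈ t, ∑ _y ∈ s \ t, f x := sum_le_sum fun x hx => sum_le_sum fun y hy =>
          htop x hx y (mem_sdiff.1 hy).1 (mem_sdiff.1 hy).2
      _ = #(s \ t) • ∑ x ∈ t, f x := by simp only [sum_const, sum_nsmul]
  calc #t • ∑ i ∈ s, f i = #t • ∑ i ∈ t, f i + #t • ∑ i ∈ s \ t, f i := by
        rw [← sum_sdiff hts, nsmul_add, add_comm]
    _ ≤ #t • ∑ i ∈ t, f i + #(s \ t) • ∑ i ∈ t, f i := by gcongr
    _ = #s • ∑ i ∈ t, f i := by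
        rw [← add_nsmul, card_sdiff_of_subset hts, Nat.add_sub_cancel' (card_le_card hts)]

end Finset

theorem Fintype.exists_card_eq_mul_card_le_mul_card_preimage {ι γ : Type*} [Fintype ι]
    [Fintype γ] [DecidableEq γ] (c : ι → γ) {r : ℕ} (hr : r ≤ Fintype.card γ) :
    ∃ T : Finset γ, #T = r ∧ r * Fintype.card ι ≤ Fintype.card γ * #{i | c i ∈ T} := by
  obtain ⟨T, -, hT, hsum⟩ :=
    exists_subset_card_eq_nsmul_sum_le univ (fun t => #{i | c i = t}) hr
  refine ⟨T, hT, ?_⟩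
  simpa only [sum_card_fiberwise_eq_card_filter, mem_univ, filter_true, card_univ,
    smul_eq_mul] using hsum

namespace SimpleGraph

variable {V : Type*} (G : SimpleGraph V)

theorem colorable_of_card_lower_adj_lt [Fintype V] [DecidableRel G.Adj] {β : Type*}
    [LinearOrder β] (f : V → β) {A : ℕ} (h : ∀ v, #{w | f w ≤ f v ∧ G.Adj w v} < A) :
    G.Colorable A := by
  classical
  suffices ∀ s : Finset V, ∃ c : V → ℕ, ∀ v ∈ s, c v < A ∧ ∀ w ∈ s, G.Adj v w → c v ≠ c w by
    obtain ⟨c, hc⟩ := this univ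
    exact ⟨Coloring.mk (fun v => ⟨c v, (hc v (mem_univ v)).1⟩) fun hvw heq =>
      (hc _ (mem_univ _)).2 _ (mem_univ _) hvw (Fin.ext_iff.1 heq)⟩
  intro s
  induction s using Finset.induction_on_max_value f with
  | empty => exact ⟨0, by simp⟩
  | insert v s hvs hmax ih =>
    obtain ⟨c, hc⟩ := ih
    have hnbrs : #({w ∈ s | G.Adj w v}.image c) < #(range A) := by
      refine card_image_le.trans_lt ((card_le_card fun w hw => ?_).trans_lt (card_range A ▸ h v))
      rw [mem_filter] at hw ⊢
      exact ⟨mem_univ w, hmax w hw.1, hw.2⟩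
    obtain ⟨col, hcol, hfree⟩ := exists_mem_notMem_of_card_lt_card hnbrs
    have hnbr_ne : ∀ w ∈ s, G.Adj w v → c w ≠ col := fun w hw hwv heq =>
      hfree (mem_image.2 ⟨w, mem_filter.2 ⟨hw, hwv⟩, heq⟩)
    have hsv : ∀ w ∈ s, w ≠ v := fun w hw hwv => hvs (hwv ▸ hw)
    refine ⟨Function.update c v col, fun u hu => ?_⟩
    rcases mem_insert.1 hu with rfl | hus
    · refine ⟨by simpa using hcol, fun w hw hadj => ?_⟩
      rcases mem_insert.1 hw with rfl | hw
      · exact absurd hadj (G.loopless.irrefl _)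
      · simpa [hsv w hw] using (hnbr_ne w hw hadj.symm).symm
    · refine ⟨by simpa [hsv u hus] using (hc u hus).1, fun w hw hadj => ?_⟩
      rcases mem_insert.1 hw with rfl | hw
      · simpa [hsv u hus] using hnbr_ne u hus hadj
      · simpa [hsv u hus, hsv w hw] using (hc u hus).2 w hw hadj

end SimpleGraph

variable {ι α : Type*}

def intersectionGraph (F : ι → Set α) : SimpleGraph ι where
  Adj i j := i ≠ j ∧ (F i ∩ F j).Nonempty
  symm := ⟨fun i j h => ⟨h.1.symm, Set.inter_comm (F i) (F j) ▸ h.2⟩⟩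
  loopless := ⟨fun _ h => h.1 rfl⟩

noncomputable def coverage (F : ι → Set α) (x : α) : ℕ := {i | x ∈ F i}.ncard

theorem exists_forall_coverage_le [Finite ι] [Nonempty α] (F : ι → Set α) :
    ∃ x, ∀ y, coverage F y ≤ coverage F x := by
  have hbdd : BddAbove (Set.range (coverage F)) :=
    ⟨Nat.card ι, by rintro _ ⟨y, rfl⟩; exact Set.ncard_le_card _⟩
  obtain ⟨x, hx⟩ := Nat.sSup_mem (Set.range_nonempty (coverage F)) hbdd
  exact ⟨x, fun y => hx ▸ le_csSup hbdd ⟨y, rfl⟩⟩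

theorem colorable_intersectionGraph_of_forall_coverage_le [Fintype ι] [LinearOrder α]
    {F : ι → Set α} (hF : ∀ i, ∃ a b, a ≤ b ∧ F i = Set.Icc a b) {A : ℕ}
    (hA : ∀ x, coverage F x ≤ A) : (intersectionGraph F).Colorable A := by
  classical
  choose a b hab hF using hF
  refine (intersectionGraph F).colorable_of_card_lower_adj_lt a fun v => ?_
  set lower : Finset ι := {w | a w ≤ a v ∧ (intersectionGraph F).Adj w v}
  have hlower : (lower : Set ι) ⊂ {i | a v ∈ F i} := by
    refine (Set.ssubset_iff_of_subset fun w hw => ?_).2 ⟨v, ?_, fun hv => ?_⟩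
    · obtain ⟨haw, -, y, hyw, hyv⟩ := (mem_filter.1 hw).2
      rw [hF] at hyw hyv
      show a v ∈ F w
      rw [hF]
      exact ⟨haw, hyv.1.trans hyw.2⟩
    · simpa [hF v] using hab v
    · exact (intersectionGraph F).loopless.irrefl v (mem_filter.1 hv).2.2
  calc #lower = (lower : Set ι).ncard := (Set.ncard_coe_finset lower).symm
    _ < coverage F (a v) := Set.ncard_lt_ncard hlower
    _ ≤ A := hA (a v)

def IsAgreeable (F : ι → Set α) (k m : ℕ) : Prop :=
  ∀ M : Finset ι, #M = m → ∃ K ⊆ M, #K = k ∧ (⋂ i ∈ K, F i).Nonempty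

namespace IsAgreeable

variable [Fintype ι] {F : ι → Set α} {k m : ℕ}

theorem exists_le_coverage (h : IsAgreeable F k m) (hm : m ≤ Fintype.card ι) :
    ∃ x, k ≤ coverage F x := by
  classical
  obtain ⟨M, -, hM⟩ := exists_subset_card_eq (s := univ) hm
  obtain ⟨K, -, rfl, x, hx⟩ := h M hM
  rw [Set.mem_iInter₂] at hx
  refine ⟨x, ?_⟩
  rw [← Set.ncard_coe_finset]
  exact Set.ncard_le_ncard fun i hi => hx i hi

theorem card_lt_of_coloring {γ : Type*} [DecidableEq γ] (h : IsAgreeable F k m)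
    (C : (intersectionGraph F).Coloring γ) {T : Finset γ} (hT : #T < k) :
    #{i | C i ∈ T} < m := by
  by_contra! hm
  obtain ⟨M, hMU, hM⟩ := exists_subset_card_eq hm
  obtain ⟨K, hKM, rfl, x, hx⟩ := h M hM
  rw [Set.mem_iInter₂] at hx
  have hinj : Set.InjOn C K := fun i hi j hj hij =>
    by_contra fun hne => C.valid ⟨hne, x, hx i hi, hx j hj⟩ hij
  have := card_le_card_of_injOn C (fun i hi => (mem_filter.1 (hMU (hKM hi))).2) hinj
  omega

end IsAgreeable

/-- Theorem 1.1 (Berg et al.): a `(k,m)`-agreeable linear society with `n` voters has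
agreement proportion at least `(k-1)/(m-1)`. -/
theorem agreeable_linear_society {k m n : ℕ} (hk : 2 ≤ k) (hkm : k ≤ m) (hmn : m ≤ n)
    (F : Fin n → Set ℝ)
    (hint : ∀ i : Fin n, ∃ a b : ℝ, a ≤ b ∧ F i = Set.Icc a b)
    (hagree : ∀ M : Finset (Fin n), M.card = m →
      ∃ K ⊆ M, K.card = k ∧ (⋂ i ∈ K, F i).Nonempty) :
    ∃ x : ℝ, ((k : ℝ) - 1) / ((m : ℝ) - 1) * (n : ℝ) ≤
      (Set.ncard {i : Fin n | x ∈ F i} : ℝ) := by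
  obtain ⟨x, hx⟩ := exists_forall_coverage_le F
  obtain ⟨C⟩ := colorable_intersectionGraph_of_forall_coverage_le hint hx
  obtain ⟨y, hky⟩ := IsAgreeable.exists_le_coverage hagree (by simpa using hmn)
  obtain ⟨T, hT, hcount⟩ := Fintype.exists_card_eq_mul_card_le_mul_card_preimage C
    (r := k - 1) (by simpa using (Nat.sub_le k 1).trans (hky.trans (hx y)))
  have hU := IsAgreeable.card_lt_of_coloring hagree C (T := T) (by omega)
  rw [Fintype.card_fin, Fintype.card_fin] at hcount
  have key : (k - 1) * n ≤ coverage F x * (m - 1) :=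
    hcount.trans (Nat.mul_le_mul_left _ (by omega))
  refine ⟨x, ?_⟩
  have hm : (0 : ℝ) < m - 1 := by
    have : (2 : ℝ) ≤ m := by exact_mod_cast hk.trans hkm
    linarith
  have hkey : ((k - 1 : ℕ) : ℝ) * n ≤ coverage F x * ((m - 1 : ℕ) : ℝ) := by
    exact_mod_cast key
  rw [Nat.cast_sub (by omega), Nat.cast_sub (by omega), Nat.cast_one] at hkey
  rw [div_mul_eq_mul_div, div_le_iff₀ hm]
  exact hkey
end

section
/- Let d ≥ 1 and p ≥ q ≥ 2 be integers with (d-1)·p < d·(q-1). Let F be a finite family of at least p convex sets in ℝ^d satisfying the (p,q)-property. Then F has a piercing set of at most p - q + 1 points. -/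
/-!
Pass first to compact convex sets, replacing each `F i` by the convex hull of chosen points of the
nonempty intersections it takes part in, and fix a strictly convex continuous `f`. Among the
intersecting subfamilies with at most `q` members pick one, `Q₀`, whose intersection has the
largest `f`-minimum, attained at `a`. Helly's theorem, applied together with the sublevel set
`{f < f a}`, shows that this is already the minimum of `f` over the intersection of some `S ⊆ Q₀`
with at most `d` members; by strict convexity `a` then lies in every intersecting subfamily of at
most `q` members containing `S`. So when `p = q` the point `a` pierces everything, and otherwise the
sets missing `a` satisfy a padded `(p - d, q - d + 1)`-property, for which `(d - 1) p < d (q - 1)`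
still holds: by induction they are pierced by `p - q` points.
-/

open Set Finset Module

section Helly

variable {ι 𝕜 E : Type*} [Field 𝕜] [LinearOrder 𝕜] [IsStrictOrderedRing 𝕜]
  [AddCommGroup E] [Module 𝕜 E] [FiniteDimensional 𝕜 E]

theorem Convex.helly_theorem_inter {L : Set E} {K : ι → Set E} {s : Finset ι}
    (hL : Convex 𝕜 L) (hK : ∀ i ∈ s, Convex 𝕜 (K i)) (hs : (⋂ i ∈ s, K i).Nonempty)
    (h : ∀ I ⊆ s, #I ≤ finrank 𝕜 E → (L ∩ ⋂ i ∈ I, K i).Nonempty) :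
    (L ∩ ⋂ i ∈ s, K i).Nonempty := by
  classical
  let G : Option ι → Set E := fun o => o.elim L K
  have hG : ∀ t : Finset ι, ⋂ o ∈ insertNone t, G o = L ∩ ⋂ i ∈ t, K i := by
    intro t; ext x; simp only [mem_iInter₂, forall_mem_insertNone, mem_inter_iff]; rfl
  rw [← hG]
  refine Convex.helly_theorem' (𝕜 := 𝕜) (fun o ho => ?_) fun I hI hIcard => ?_
  · cases o with
    | none => exact hL
    | some i => exact hK i (some_mem_insertNone.1 ho)
  have hIs : eraseNone I ⊆ s := fun i hi => some_mem_insertNone.1 (hI (mem_eraseNone.1 hi))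
  by_cases hnone : none ∈ I
  · have hcard : #(eraseNone I) ≤ finrank 𝕜 E := by
      rw [card_eraseNone_of_mem hnone]; omega
    refine (hG _ ▸ h _ hIs hcard).mono (biInter_subset_biInter_left fun o ho => ?_)
    cases o with
    | none => exact none_mem_insertNone
    | some i => exact some_mem_insertNone.2 (mem_eraseNone.2 ho)
  · refine hs.mono (subset_iInter₂ fun o ho => ?_)
    cases o with
    | none => exact absurd ho hnone
    | some i => exact biInter_subset_of_mem (hIs (mem_eraseNone.2 ho))

theorem ConvexOn.exists_subfamily_isMinOn {f : E → 𝕜} (hf : ConvexOn 𝕜 univ f)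
    {K : ι → Set E} {s : Finset ι} (hK : ∀ i ∈ s, Convex 𝕜 (K i)) {x : E} (hx : x ∈ ⋂ i ∈ s, K i)
    (hmin : IsMinOn f (⋂ i ∈ s, K i) x) :
    ∃ S ⊆ s, #S ≤ finrank 𝕜 E ∧ IsMinOn f (⋂ i ∈ S, K i) x := by
  by_contra! hsmall
  simp only [isMinOn_iff, not_forall, not_le] at hsmall
  obtain ⟨y, hy, hyK⟩ := Convex.helly_theorem_inter (hf.convex_lt (f x)) hK ⟨x, hx⟩
    fun I hI hIcard => by
      obtain ⟨y, hyI, hy⟩ := hsmall I hI hIcard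
      exact ⟨y, ⟨mem_univ y, hy⟩, hyI⟩
  exact hy.2.not_ge (hmin hyK)

end Helly

theorem StrictConvexOn.comp_linearEquiv {𝕜 E F β : Type*} [Semiring 𝕜] [PartialOrder 𝕜]
    [AddCommMonoid E] [AddCommMonoid F] [Module 𝕜 E] [Module 𝕜 F]
    [AddCommMonoid β] [PartialOrder β] [SMul 𝕜 β] {g : F → β}
    (hg : StrictConvexOn 𝕜 univ g) (e : E ≃ₗ[𝕜] F) : StrictConvexOn 𝕜 univ (g ∘ e) :=
  ⟨convex_univ, fun x _ y _ hxy a b ha hb hab => by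
    simpa using hg.2 trivial trivial (e.injective.ne hxy) ha hb hab⟩

theorem exists_strictConvexOn_continuous (E : Type*) [NormedAddCommGroup E] [NormedSpace ℝ E]
    [FiniteDimensional ℝ E] : ∃ f : E → ℝ, StrictConvexOn ℝ univ f ∧ Continuous f := by
  let e := ContinuousLinearEquiv.ofFinrankEq (finrank_euclideanSpace_fin (𝕜 := ℝ)
    (n := finrank ℝ E)).symm
  have hnorm : StrictConvexOn ℝ univ fun y : EuclideanSpace ℝ (Fin (finrank ℝ E)) => ‖y‖ ^ 2 :=
    (strongConvexOn_iff_convex.2 (by simpa using convexOn_const 0 convex_univ)).strictConvexOn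
      two_pos
  exact ⟨_, hnorm.comp_linearEquiv e.toLinearEquiv, (continuous_norm.comp e.continuous).pow 2⟩

theorem add_one_le_of_sub_one_mul_lt {d p q : ℕ} (hqp : q ≤ p) (h : (d - 1) * p < d * (q - 1)) :
    d + 1 ≤ q := by
  by_contra! hqd
  have : (d - 1) * q ≤ (d - 1) * p := Nat.mul_le_mul_left _ hqp
  rcases Nat.eq_zero_or_pos d with rfl | hd
  · simp at h
  rcases Nat.eq_zero_or_pos q with rfl | hq
  · simp at h
  zify [hd, hq] at h this
  nlinarith

theorem sub_one_mul_sub_lt {d p q : ℕ} (hdq : d + 1 ≤ q) (hqp : q ≤ p)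
    (h : (d - 1) * p < d * (q - 1)) : (d - 1) * (p - d) < d * (q - d + 1 - 1) := by
  rcases Nat.eq_zero_or_pos d with rfl | hd
  · simp at h
  rw [Nat.add_sub_cancel]
  zify [hd, (by omega : d ≤ p), (by omega : d ≤ q), (by omega : 1 ≤ q)] at h ⊢
  nlinarith

section Padded

variable {ι α : Type*}

/-- The `(p, q)`-property of the subfamily `s` padded with `p` copies of the whole space; unlike the
plain property it still says something about subfamilies with fewer than `p` members. -/
def HasPaddedPQProperty (K : ι → Set α) (s : Finset ι) (p q : ℕ) : Prop :=
  ∀ G ⊆ s, #G ≤ p → ∃ Q ⊆ G, #Q = q - (p - #G) ∧ (⋂ i ∈ Q, K i).Nonempty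

variable {K : ι → Set α} {s : Finset ι} {p q : ℕ}

theorem hasPaddedPQProperty_of_forall_card_eq (hs : p ≤ #s)
    (h : ∀ P ⊆ s, #P = p → ∃ Q ⊆ P, #Q = q ∧ (⋂ i ∈ Q, K i).Nonempty) :
    HasPaddedPQProperty K s p q := by
  classical
  intro G hGs hG
  obtain ⟨P, hGP, hPs, hP⟩ := exists_subsuperset_card_eq hGs hG hs
  obtain ⟨Q, hQP, hQ, hQK⟩ := h P hPs hP
  have hQG : q - (p - #G) ≤ #(Q ∩ G) := by
    have hPG : #(P \ G) = p - #G := by rw [card_sdiff_of_subset hGP, hP]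
    have := Finset.card_le_card (sdiff_subset_sdiff hQP (subset_refl G))
    have := card_inter_add_card_sdiff Q G
    omega
  obtain ⟨Q', hQ'QG, hQ'⟩ := exists_subset_card_eq hQG
  exact ⟨Q', hQ'QG.trans inter_subset_right, hQ',
    hQK.mono (biInter_subset_biInter_left (hQ'QG.trans inter_subset_left))⟩

theorem HasPaddedPQProperty.biInter_nonempty (h : HasPaddedPQProperty K s p p) {G : Finset ι}
    (hGs : G ⊆ s) (hG : #G ≤ p) : (⋂ i ∈ G, K i).Nonempty := by
  obtain ⟨Q, hQG, hQ, hQK⟩ := h G hGs hG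
  rwa [eq_of_subset_of_card_le hQG (by omega)] at hQK

theorem HasPaddedPQProperty.of_forall_not_mem (h : HasPaddedPQProperty K s p q)
    (hne : ∀ i ∈ s, (K i).Nonempty) {S : Finset ι} {k : ℕ} (hSs : S ⊆ s) (hS : #S ≤ k)
    (hkq : k ≤ q) (hqp : q < p) {a : α} (haS : a ∈ ⋂ i ∈ S, K i)
    (ha : ∀ Q ⊆ s, S ⊆ Q → #Q ≤ q → (⋂ i ∈ Q, K i).Nonempty → a ∈ ⋂ i ∈ Q, K i)
    {t : Finset ι} (hts : t ⊆ s) (hta : ∀ i ∈ t, a ∉ K i) :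
    HasPaddedPQProperty K t (p - k) (q - k + 1) := by
  classical
  intro G hGt hG
  have hGs := hGt.trans hts
  by_cases hsmall : (q - k + 1) - (p - k - #G) ≤ 1
  · rcases Nat.le_one_iff_eq_zero_or_eq_one.1 hsmall with h0 | h1
    · exact ⟨∅, empty_subset G, by simp [h0], ⟨a, by simp⟩⟩
    · obtain ⟨i, hi⟩ : G.Nonempty := card_pos.1 (by omega)
      exact ⟨{i}, singleton_subset_iff.2 hi, by simp [h1], by simpa using hne i (hGs hi)⟩
  have hdisj : Disjoint G S :=
    disjoint_left.2 fun i hiG hiS => hta i (hGt hiG) (mem_iInter₂.1 haS i hiS)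
  obtain ⟨Q₁, hQ₁, hQ₁card, hQ₁K⟩ :=
    h (G ∪ S) (union_subset hGs hSs) (by rw [card_union_of_disjoint hdisj]; omega)
  rw [card_union_of_disjoint hdisj] at hQ₁card
  have hsplit : #Q₁ ≤ #(Q₁ ∩ G) + #(Q₁ ∩ S) := by
    calc #Q₁ = #(Q₁ ∩ (G ∪ S)) := by rw [Finset.inter_eq_left.2 hQ₁]
      _ ≤ _ := by rw [Finset.inter_union_distrib_left]; exact card_union_le _ _
  -- if `Q₁` contained `S`, then `a` would lie in the sets of `Q₁ ∩ G`, which avoid `a`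
  have hSQ₁ : ¬ S ⊆ Q₁ := by
    intro hSQ₁
    have haQ₁ := ha Q₁ (hQ₁.trans (union_subset hGs hSs)) hSQ₁ (by omega) hQ₁K
    obtain ⟨i, hi⟩ : (Q₁ ∩ G).Nonempty :=
      card_pos.1 (by have := Finset.card_le_card (inter_subset_right : Q₁ ∩ S ⊆ S); omega)
    exact hta i (hGt (mem_inter.1 hi).2) (mem_iInter₂.1 haQ₁ i (mem_inter.1 hi).1)
  have hQ₁S : #(Q₁ ∩ S) < #S :=
    card_lt_card ⟨inter_subset_right, fun hS => hSQ₁ (hS.trans inter_subset_left)⟩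
  obtain ⟨Q, hQ, hQcard⟩ := exists_subset_card_eq (s := Q₁ ∩ G)
    (n := (q - k + 1) - (p - k - #G)) (by omega)
  exact ⟨Q, hQ.trans inter_subset_right, hQcard,
    hQ₁K.mono (biInter_subset_biInter_left (hQ.trans inter_subset_left))⟩

end Padded

section Compact

variable {ι E : Type*} [NormedAddCommGroup E] [NormedSpace ℝ E] [FiniteDimensional ℝ E]

theorem exists_mem_biInter_of_superset {K : ι → Set E} (hKc : ∀ i, IsCompact (K i))
    (hK : ∀ i, Convex ℝ (K i)) (s : Finset ι) (q : ℕ) :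
    ∃ S ⊆ s, #S ≤ finrank ℝ E ∧ ∃ a ∈ ⋂ i ∈ S, K i, ∀ Q ⊆ s, S ⊆ Q → #Q ≤ q →
      (⋂ i ∈ Q, K i).Nonempty → a ∈ ⋂ i ∈ Q, K i := by
  classical
  obtain ⟨f, hf, hfc⟩ := exists_strictConvexOn_continuous E
  let 𝒬 := s.powerset.filter fun Q => Q.Nonempty ∧ #Q ≤ q ∧ (⋂ i ∈ Q, K i).Nonempty
  have h𝒬 : ∀ Q ⊆ s, #Q ≤ q → (⋂ i ∈ Q, K i).Nonempty → Q = ∅ ∨ Q ∈ 𝒬 := fun Q hQ hQq hQK =>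
    Q.eq_empty_or_nonempty.imp_right fun hQ' => mem_filter.2 ⟨mem_powerset.2 hQ, hQ', hQq, hQK⟩
  rcases 𝒬.eq_empty_or_nonempty with h𝒬e | ⟨Q₀, hQ₀⟩
  · refine ⟨∅, empty_subset s, by simp, 0, by simp, fun Q hQ _ hQq hQK => ?_⟩
    rcases h𝒬 Q hQ hQq hQK with rfl | hQ𝒬
    · simp
    · simp [h𝒬e] at hQ𝒬
  have hmin : ∀ Q ∈ 𝒬, ∃ x ∈ ⋂ i ∈ Q, K i, IsMinOn f (⋂ i ∈ Q, K i) x := by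
    intro Q hQ
    obtain ⟨-, ⟨j, hj⟩, -, hQK⟩ := mem_filter.1 hQ
    exact ((hKc j).of_isClosed_subset (isClosed_biInter fun i _ => (hKc i).isClosed)
      (biInter_subset_of_mem hj)).exists_isMinOn hQK hfc.continuousOn
  choose! m hmK hm using hmin
  obtain ⟨Q₀, hQ₀, hQ₀max⟩ := exists_max_image 𝒬 (f ∘ m) ⟨Q₀, hQ₀⟩
  have hQ₀s : Q₀ ⊆ s := mem_powerset.1 (mem_filter.1 hQ₀).1
  obtain ⟨S, hSQ₀, hS, hSmin⟩ := hf.convexOn.exists_subfamily_isMinOn (fun i _ => hK i)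
    (hmK Q₀ hQ₀) (hm Q₀ hQ₀)
  have hsub : ∀ {Q : Finset ι}, S ⊆ Q → ⋂ i ∈ Q, K i ⊆ ⋂ i ∈ S, K i :=
    fun hSQ => biInter_subset_biInter_left hSQ
  refine ⟨S, hSQ₀.trans hQ₀s, hS, m Q₀, hsub hSQ₀ (hmK Q₀ hQ₀), fun Q hQ hSQ hQq hQK => ?_⟩
  rcases h𝒬 Q hQ hQq hQK with rfl | hQ𝒬
  · simp
  -- `f (m Q) ≤ f (m Q₀)` by the choice of `Q₀`, so both points minimise `f` on `⋂ S`
  have hmQ : IsMinOn f (⋂ i ∈ S, K i) (m Q) :=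
    fun y hy => (hQ₀max Q hQ𝒬).trans (hSmin hy)
  have := (hf.subset (subset_univ _) (convex_iInter₂ fun i _ => hK i)).eq_of_isMinOn hmQ hSmin
    (hsub hSQ (hmK Q hQ𝒬)) (hsub hSQ₀ (hmK Q₀ hQ₀))
  exact this ▸ hmK Q hQ𝒬

theorem exists_pierce_of_hasPaddedPQProperty {K : ι → Set E} (hKc : ∀ i, IsCompact (K i))
    (hK : ∀ i, Convex ℝ (K i)) (hne : ∀ i, (K i).Nonempty) {s : Finset ι} {p q : ℕ}
    (hqp : q ≤ p) (hcond : (finrank ℝ E - 1) * p < finrank ℝ E * (q - 1))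
    (h : HasPaddedPQProperty K s p q) :
    ∃ C : Finset E, #C ≤ p - q + 1 ∧ ∀ i ∈ s, ∃ x ∈ C, x ∈ K i := by
  classical
  induction p using Nat.strong_induction_on generalizing q s with
  | _ p ih =>
  have hd : 0 < finrank ℝ E := Nat.pos_of_ne_zero fun h0 => by simp [h0] at hcond
  have hdq := add_one_le_of_sub_one_mul_lt hqp hcond
  obtain ⟨S, hSs, hS, a, haS, ha⟩ := exists_mem_biInter_of_superset hKc hK s q
  rcases Nat.eq_or_lt_of_le hqp with rfl | hqp
  · refine ⟨{a}, by simp, fun i hi => ⟨a, mem_singleton_self a, ?_⟩⟩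
    have hiS : insert i S ⊆ s := insert_subset hi hSs
    have hcard : #(insert i S) ≤ q := (card_insert_le i S).trans (by omega)
    exact mem_iInter₂.1 (ha _ hiS (subset_insert i S) hcard (h.biInter_nonempty hiS hcard)) i
      (mem_insert_self i S)
  have hrest := h.of_forall_not_mem (fun i _ => hne i) hSs hS (by omega) hqp haS ha
    (filter_subset (fun i => a ∉ K i) s) fun i hi => (mem_filter.1 hi).2
  obtain ⟨C, hC, hCK⟩ := ih (p - finrank ℝ E) (by omega) (q := q - finrank ℝ E + 1) (by omega)
    (sub_one_mul_sub_lt hdq hqp.le hcond) hrest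
  refine ⟨insert a C, (card_insert_le a C).trans (by omega), fun i hi => ?_⟩
  by_cases hai : a ∈ K i
  · exact ⟨a, mem_insert_self a C, hai⟩
  · obtain ⟨x, hxC, hx⟩ := hCK i (mem_filter.2 ⟨hi, hai⟩)
    exact ⟨x, mem_insert_of_mem hxC, hx⟩

end Compact

theorem exists_isCompact_convex_subset_biInter_nonempty {ι E : Type*} [Finite ι]
    [AddCommGroup E] [Module ℝ E] [TopologicalSpace E] [IsTopologicalAddGroup E]
    [ContinuousSMul ℝ E] {F : ι → Set E} (hF : ∀ i, Convex ℝ (F i)) :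
    ∃ K : ι → Set E, (∀ i, K i ⊆ F i) ∧ (∀ i, IsCompact (K i)) ∧ (∀ i, Convex ℝ (K i)) ∧
      ∀ s : Finset ι, (⋂ i ∈ s, F i).Nonempty → (⋂ i ∈ s, K i).Nonempty := by
  have : ∀ s : Finset ι, ∃ x, (⋂ i ∈ s, F i).Nonempty → x ∈ ⋂ i ∈ s, F i := fun s => by
    by_cases hs : (⋂ i ∈ s, F i).Nonempty
    exacts [⟨hs.some, fun _ => hs.some_mem⟩, ⟨0, fun h => absurd h hs⟩]
  choose w hw using this
  let W : ι → Set E := fun i => w '' {s | i ∈ s ∧ (⋂ j ∈ s, F j).Nonempty}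
  refine ⟨fun i => convexHull ℝ (W i), fun i => convexHull_min ?_ (hF i),
    fun i => (Set.toFinite (W i)).isCompact_convexHull ℝ, fun i => convex_convexHull ℝ (W i),
    fun s hs => ⟨w s, mem_iInter₂.2 fun i hi => subset_convexHull ℝ (W i) ⟨s, ⟨hi, hs⟩, rfl⟩⟩⟩
  rintro _ ⟨s, ⟨hi, hs⟩, rfl⟩
  exact biInter_subset_of_mem hi (hw s hs)

theorem hadwiger_debrunner_general {d p q : ℕ} (hpq : q ≤ p)
    (hcond : (d - 1) * p < d * (q - 1))
    {ι : Type*} [Fintype ι] (hcard : p ≤ Fintype.card ι)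
    (F : ι → Set (Fin d → ℝ)) (hconv : ∀ i, Convex ℝ (F i))
    (hne : ∀ i, (F i).Nonempty)
    (hpqprop : ∀ P : Finset ι, P.card = p →
      ∃ Q ⊆ P, Q.card = q ∧ (⋂ i ∈ Q, F i).Nonempty) :
    ∃ C : Finset (Fin d → ℝ), C.card ≤ p - q + 1 ∧ ∀ i, ∃ x ∈ C, x ∈ F i := by
  obtain ⟨K, hKF, hKc, hK, hKne⟩ := exists_isCompact_convex_subset_biInter_nonempty hconv
  have hpad : HasPaddedPQProperty K univ p q :=
    hasPaddedPQProperty_of_forall_card_eq hcard fun P _ hP =>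
      (hpqprop P hP).imp fun Q ⟨hQP, hQ, hQF⟩ => ⟨hQP, hQ, hKne Q hQF⟩
  obtain ⟨C, hC, hCK⟩ := exists_pierce_of_hasPaddedPQProperty hKc hK
    (fun i => by simpa using hKne {i} (by simpa using hne i)) hpq
    (by rwa [finrank_fin_fun ℝ]) hpad
  exact ⟨C, hC, fun i => (hCK i (mem_univ i)).imp fun x hx => ⟨hx.1, hKF i hx.2⟩⟩

/-- Hadwiger–Debrunner theorem: if `(d-1)p < d(q-1)` with `p ≥ q ≥ 2`, `d ≥ 1`,
then a finite family of at least `p` convex sets in `ℝ^d` with the `(p,q)`-property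
can be pierced by at most `p - q + 1` points. -/
theorem hadwiger_debrunner {d p q : ℕ} (hd : 1 ≤ d) (hq : 2 ≤ q) (hpq : q ≤ p)
    (hcond : (d - 1) * p < d * (q - 1))
    {ι : Type*} [Fintype ι] (hcard : p ≤ Fintype.card ι)
    (F : ι → Set (Fin d → ℝ)) (hconv : ∀ i, Convex ℝ (F i))
    (hne : ∀ i, (F i).Nonempty)
    (hpqprop : ∀ P : Finset ι, P.card = p →
      ∃ Q ⊆ P, Q.card = q ∧ (⋂ i ∈ Q, F i).Nonempty) :
    ∃ C : Finset (Fin d → ℝ), C.card ≤ p - q + 1 ∧ ∀ i, ∃ x ∈ C, x ∈ F i :=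
  hadwiger_debrunner_general hpq hcond hcard F hconv hne hpqprop
end

section
/- Let d ≥ 1 and let F be a finite family of closed line segments in ℝ^d (each member is the segment [x,y] joining two points x, y ∈ ℝ^d) satisfying the (4,3)-property: among every 4 members of F there exist 3 with a common point. Then F has a piercing set of at most 3 points. -/
/-!
If every three members meet, then the members all pass through one point of a fixed member `F a`:
the sets `F a ∩ F i` are pairwise intersecting convex subsets of a line, so Helly's theorem on
the line applies. Otherwise pick `a, b, c` without a common point; by the `(4,3)`-property every
other member meets one of `F a ∩ F b`, `F b ∩ F c`, `F c ∩ F a`. If these are at most points,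
they form the piercing set.

Otherwise, say, `F a ∩ F b` is a nondegenerate segment, so `F a` and `F b` lie on a line `L`. A
segment not contained in `L` meets it in at most one point, hence segments that pairwise meet on
`L` have a common point. If `F c ⊆ L`, then `F c` misses `F a` or `F b` (Helly on `L`), and both
the members missing `F a ∩ F b` and those meeting it pairwise meet on `L`: two points suffice. If
`F c ⊄ L`, let `q` be the only point of `F c` on `L`; then `q` pierces every member missing
`F a ∩ F b`, and any two of the remaining members avoiding `q` meet on `L` or on `F c`. Among
the latter, the one whose trace on `F c` ends first provides the last two points: its point on
`L` and the end of that trace.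
-/

open Set

section

variable {ι κ α E : Type*}

def Pierceable (F : ι → Set α) (n : ℕ) : Prop :=
  ∃ C : Finset α, C.card ≤ n ∧ ∀ i, ∃ x ∈ C, x ∈ F i

def HasFourThreeProperty (F : ι → Set α) : Prop :=
  ∀ P : Finset ι, P.card = 4 → ∃ Q ⊆ P, Q.card = 3 ∧ (⋂ i ∈ Q, F i).Nonempty

section Sets

variable {F : ι → Set α}

lemma Pierceable.mono {m n : ℕ} (h : Pierceable F m) (hmn : m ≤ n) : Pierceable F n :=
  let ⟨C, hC, hF⟩ := h
  ⟨C, hC.trans hmn, hF⟩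

lemma pierceable_one {p : α} (h : ∀ i, p ∈ F i) : Pierceable F 1 :=
  ⟨{p}, by simp, fun i => ⟨p, Finset.mem_singleton_self p, h i⟩⟩

lemma pierceable_two (p q : α) (h : ∀ i, p ∈ F i ∨ q ∈ F i) : Pierceable F 2 := by
  classical
  exact ⟨{p, q}, Finset.card_le_two, fun i => (h i).elim (⟨p, by simp, ·⟩) (⟨q, by simp, ·⟩)⟩

lemma pierceable_three (p q r : α) (h : ∀ i, p ∈ F i ∨ q ∈ F i ∨ r ∈ F i) :
    Pierceable F 3 := by
  classical
  refine ⟨{p, q, r}, Finset.card_le_three, fun i => ?_⟩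
  rcases h i with h | h | h
  exacts [⟨p, by simp, h⟩, ⟨q, by simp, h⟩, ⟨r, by simp, h⟩]

lemma pierceable_of_card_le [Fintype ι] {n : ℕ} (hne : ∀ i, (F i).Nonempty)
    (hn : Fintype.card ι ≤ n) : Pierceable F n := by
  classical
  choose p hp using hne
  exact ⟨Finset.univ.image p, Finset.card_image_le.trans hn,
    fun i => ⟨p i, Finset.mem_image_of_mem p (Finset.mem_univ i), hp i⟩⟩

lemma exists_mem_forall_mem_of_subsingleton_inter {X Y : Set α} (hX : X.Nonempty)
    (h : (X ∩ Y).Subsingleton) : ∃ p ∈ X, ∀ W : Set α, (X ∩ Y ∩ W).Nonempty → p ∈ W := by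
  rcases (X ∩ Y).eq_empty_or_nonempty with h0 | ⟨p, hp⟩
  · obtain ⟨p, hp⟩ := hX
    exact ⟨p, hp, fun W ⟨y, hy, _⟩ => absurd (h0 ▸ hy) (notMem_empty y)⟩
  · exact ⟨p, hp.1, fun W ⟨y, hy, hyW⟩ => h hy hp ▸ hyW⟩

lemma HasFourThreeProperty.inter_nonempty (h : HasFourThreeProperty F)
    {i j k l : ι} (hij : i ≠ j) (hik : i ≠ k) (hil : i ≠ l) (hjk : j ≠ k) (hjl : j ≠ l)
    (hkl : k ≠ l) :
    (F i ∩ F j ∩ F k).Nonempty ∨ (F i ∩ F j ∩ F l).Nonempty ∨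
      (F i ∩ F k ∩ F l).Nonempty ∨ (F j ∩ F k ∩ F l).Nonempty := by
  classical
  have hcard : ({i, j, k, l} : Finset ι).card = 4 := by simp [*]
  obtain ⟨Q, hQP, hQ, x, hx⟩ := h _ hcard
  obtain ⟨m, hmQ, hPQ⟩ := Finset.exists_eq_insert_iff.2 ⟨hQP, by rw [hQ, hcard]⟩
  have hxF : ∀ n ∈ ({i, j, k, l} : Finset ι), n ≠ m → x ∈ F n := fun n hn hnm =>
    mem_iInter₂.1 hx n (by rw [← hPQ] at hn; simpa [hnm] using hn)
  have hm : m ∈ ({i, j, k, l} : Finset ι) := hPQ ▸ Finset.mem_insert_self m Q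
  simp only [Finset.mem_insert, Finset.mem_singleton] at hm hxF
  rcases hm with rfl | rfl | rfl | rfl
  · exact .inr <| .inr <| .inr
      ⟨x, ⟨hxF j (by simp) hij.symm, hxF k (by simp) hik.symm⟩, hxF l (by simp) hil.symm⟩
  · exact .inr <| .inr <| .inl
      ⟨x, ⟨hxF i (by simp) hij, hxF k (by simp) hjk.symm⟩, hxF l (by simp) hjl.symm⟩
  · exact .inr <| .inl ⟨x, ⟨hxF i (by simp) hik, hxF j (by simp) hjk⟩, hxF l (by simp) hkl.symm⟩
  · exact .inl ⟨x, ⟨hxF i (by simp) hil, hxF j (by simp) hjl⟩, hxF k (by simp) hkl⟩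

lemma ne_of_inter_inter_eq_empty {a b j : ι} (hne : (F a ∩ F b).Nonempty)
    (hj : F a ∩ F b ∩ F j = ∅) : j ≠ a ∧ j ≠ b := by
  constructor <;> rintro rfl
  · exact hne.ne_empty (by rwa [inter_right_comm, inter_self] at hj)
  · exact hne.ne_empty (by rwa [inter_assoc, inter_self] at hj)

lemma inter_nonempty_of_inter_inter_nonempty (h43 : HasFourThreeProperty F) {a b c z z' : ι}
    (hac : a ≠ c) (habc : F a ∩ F b ∩ F c = ∅) (hz : (F a ∩ F b ∩ F z).Nonempty)
    (hz' : (F a ∩ F b ∩ F z').Nonempty) (hzz' : z ≠ z') :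
    (F z ∩ F z' ∩ F a).Nonempty ∨ (F z ∩ F z' ∩ F c).Nonempty ∨
      (F z ∩ F a ∩ F c).Nonempty ∨ (F z' ∩ F a ∩ F c).Nonempty := by
  obtain ⟨x, ⟨hxa, hxb⟩, hxz⟩ := hz
  obtain ⟨x', ⟨hx'a, hx'b⟩, hx'z'⟩ := hz'
  by_cases hza : z = a
  · exact .inl ⟨x', ⟨hza ▸ hx'a, hx'z'⟩, hx'a⟩
  by_cases hz'a : z' = a
  · exact .inl ⟨x, ⟨hxz, hz'a ▸ hxa⟩, hxa⟩
  have hzc : z ≠ c := by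
    rintro rfl
    exact eq_empty_iff_forall_notMem.1 habc x ⟨⟨hxa, hxb⟩, hxz⟩
  have hz'c : z' ≠ c := by
    rintro rfl
    exact eq_empty_iff_forall_notMem.1 habc x' ⟨⟨hx'a, hx'b⟩, hx'z'⟩
  exact h43.inter_nonempty hzz' hza hzc hz'a hz'c hac

lemma forall_mem_of_inter_inter_eq_empty (h43 : HasFourThreeProperty F) {a b c : ι}
    (hab : a ≠ b) (hac : a ≠ c) (hbc : b ≠ c) (habc : F a ∩ F b ∩ F c = ∅)
    (hne : (F a ∩ F b).Nonempty) {L : Set α} (ha : F a ⊆ L) (hb : F b ⊆ L) {q : α}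
    (hqc : q ∈ F c) (hq : ∀ W, (F c ∩ L ∩ W).Nonempty → q ∈ W) {j : ι}
    (hj : F a ∩ F b ∩ F j = ∅) : q ∈ F j := by
  obtain ⟨hja, hjb⟩ := ne_of_inter_inter_eq_empty hne hj
  by_cases hjc : j = c
  · exact hjc ▸ hqc
  rcases h43.inter_nonempty hab hac (Ne.symm hja) hbc (Ne.symm hjb) (Ne.symm hjc)
    with h | h | ⟨y, ⟨hya, hyc⟩, hyj⟩ | ⟨y, ⟨hyb, hyc⟩, hyj⟩
  · exact absurd habc h.ne_empty
  · exact absurd hj h.ne_empty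
  · exact hq _ ⟨y, ⟨hyc, ha hya⟩, hyj⟩
  · exact hq _ ⟨y, ⟨hyc, hb hyb⟩, hyj⟩

lemma inter_nonempty_or_of_notMem (h43 : HasFourThreeProperty F) {a b c z z' : ι} (hac : a ≠ c)
    (habc : F a ∩ F b ∩ F c = ∅) {L : Set α} (ha : F a ⊆ L) {q : α}
    (hq : ∀ W, (F c ∩ L ∩ W).Nonempty → q ∈ W) (hz : (F a ∩ F b ∩ F z).Nonempty)
    (hz' : (F a ∩ F b ∩ F z').Nonempty) (hqz : q ∉ F z) (hqz' : q ∉ F z') (hzz' : z ≠ z') :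
    (F z ∩ F z' ∩ L).Nonempty ∨ (F z ∩ F c ∩ (F z' ∩ F c)).Nonempty := by
  rcases inter_nonempty_of_inter_inter_nonempty h43 hac habc hz hz' hzz'
    with ⟨y, hy, hya⟩ | ⟨y, hy, hyc⟩ | ⟨y, ⟨hyz, hya⟩, hyc⟩ | ⟨y, ⟨hyz', hya⟩, hyc⟩
  · exact .inl ⟨y, hy, ha hya⟩
  · exact .inr ⟨y, ⟨hy.1, hyc⟩, hy.2, hyc⟩
  · exact absurd (hq _ ⟨y, ⟨hyc, ha hya⟩, hyz⟩) hqz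
  · exact absurd (hq _ ⟨y, ⟨hyc, ha hya⟩, hyz'⟩) hqz'

lemma pierceable_three_of_subsingleton_inter (hne : ∀ i, (F i).Nonempty)
    (h43 : HasFourThreeProperty F) {a b c : ι} (hab : a ≠ b) (hac : a ≠ c) (hbc : b ≠ c)
    (habc : F a ∩ F b ∩ F c = ∅)
    (hsab : (F a ∩ F b).Subsingleton) (hsbc : (F b ∩ F c).Subsingleton)
    (hsca : (F c ∩ F a).Subsingleton) : Pierceable F 3 := by
  obtain ⟨p, hpa, hp⟩ := exists_mem_forall_mem_of_subsingleton_inter (hne a) hsab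
  obtain ⟨q, hqb, hq⟩ := exists_mem_forall_mem_of_subsingleton_inter (hne b) hsbc
  obtain ⟨r, hrc, hr⟩ := exists_mem_forall_mem_of_subsingleton_inter (hne c) hsca
  refine pierceable_three p q r fun i => ?_
  by_cases hia : i = a
  · exact .inl (hia ▸ hpa)
  by_cases hib : i = b
  · exact .inr (.inl (hib ▸ hqb))
  by_cases hic : i = c
  · exact .inr (.inr (hic ▸ hrc))
  rcases h43.inter_nonempty hab hac (Ne.symm hia) hbc (Ne.symm hib) (Ne.symm hic)
    with h | h | h | h
  · exact absurd habc h.ne_empty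
  · exact .inl (hp _ h)
  · exact .inr (.inr (hr _ (by rwa [inter_comm (F c)])))
  · exact .inr (.inl (hq _ h))

end Sets

lemma helly_real {s : Finset κ} {S : κ → Set ℝ} (hconv : ∀ i ∈ s, Convex ℝ (S i))
    (hpair : ∀ i ∈ s, ∀ j ∈ s, (S i ∩ S j).Nonempty) : ∃ x, ∀ i ∈ s, x ∈ S i := by
  classical
  suffices (⋂ i ∈ s, S i).Nonempty by
    obtain ⟨x, hx⟩ := this
    exact ⟨x, mem_iInter₂.1 hx⟩
  refine Convex.helly_theorem' hconv fun I hIs hI => ?_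
  rw [Module.finrank_self] at hI
  rcases I.eq_empty_or_nonempty with rfl | ⟨i, hi⟩
  · simp
  have hI' : (I.erase i).card ≤ 1 := by rw [Finset.card_erase_of_mem hi]; omega
  obtain ⟨j, hj, hIij⟩ : ∃ j ∈ I, ∀ k ∈ I, k = i ∨ k = j := by
    by_cases h : ∃ j ∈ I, j ≠ i
    · obtain ⟨j, hj, hji⟩ := h
      exact ⟨j, hj, fun k hk => or_iff_not_imp_left.2 fun hki => Finset.card_le_one.1 hI' k
        (Finset.mem_erase.2 ⟨hki, hk⟩) j (Finset.mem_erase.2 ⟨hji, hj⟩)⟩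
    · push Not at h
      exact ⟨i, hi, fun k hk => .inl (h k hk)⟩
  obtain ⟨x, hxi, hxj⟩ := hpair i (hIs hi) j (hIs hj)
  exact ⟨x, mem_iInter₂.2 fun k hk => (hIij k hk).elim (· ▸ hxi) (· ▸ hxj)⟩

section AddCommGroup

variable [AddCommGroup E] [Module ℝ E]

lemma helly_affineSpan_pair {u v : E} {s : Finset κ} {S : κ → Set E}
    (hline : ∀ i ∈ s, S i ⊆ line[ℝ, u, v]) (hconv : ∀ i ∈ s, Convex ℝ (S i))
    (hpair : ∀ i ∈ s, ∀ j ∈ s, (S i ∩ S j).Nonempty) : ∃ x, ∀ i ∈ s, x ∈ S i := by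
  obtain ⟨t, ht⟩ := helly_real (S := fun i => AffineMap.lineMap u v ⁻¹' S i)
    (fun i hi => (hconv i hi).affine_preimage _) fun i hi j hj => by
      obtain ⟨x, hxi, hxj⟩ := hpair i hi j hj
      obtain ⟨t, rfl⟩ := mem_affineSpan_pair_iff_exists_lineMap_eq.1
        (hline i hi hxi)
      exact ⟨t, hxi, hxj⟩
  exact ⟨_, ht⟩

lemma segment_subset_affineSpan_pair (x y : E) : segment ℝ x y ⊆ line[ℝ, x, y] := by
  rw [segment_eq_image_lineMap]
  rintro _ ⟨t, -, rfl⟩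
  exact AffineMap.lineMap_mem_affineSpan_pair t x y

lemma segment_subset_or_subsingleton_inter (P : AffineSubspace ℝ E) (x y : E) :
    segment ℝ x y ⊆ P ∨ (segment ℝ x y ∩ P).Subsingleton := by
  refine or_iff_not_imp_right.2 fun h => ?_
  obtain ⟨u, ⟨hu, huP⟩, v, ⟨hv, hvP⟩, huv⟩ := not_subsingleton_iff.1 h
  rw [segment_eq_image_lineMap] at hu hv ⊢
  obtain ⟨s, -, rfl⟩ := hu
  obtain ⟨t, -, rfl⟩ := hv
  have hst : t - s ≠ 0 := sub_ne_zero.2 fun h => huv (h ▸ rfl)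
  rintro _ ⟨r, -, rfl⟩
  have key : AffineMap.lineMap x y r = AffineMap.lineMap (AffineMap.lineMap x y s)
      (AffineMap.lineMap x y t) ((r - s) / (t - s)) := by
    simp only [AffineMap.lineMap_apply_module]
    have : r - s = (r - s) / (t - s) * (t - s) := (div_mul_cancel₀ _ hst).symm
    linear_combination (norm := module) this • (y - x)
  rw [key]
  exact AffineMap.lineMap_mem _ huP hvP

def IsSegment (S : Set E) : Prop :=
  ∃ x y, S = segment ℝ x y

namespace IsSegment

variable {S : Set E}

lemma nonempty (h : IsSegment S) : S.Nonempty := by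
  obtain ⟨x, y, rfl⟩ := h
  exact ⟨x, left_mem_segment ℝ x y⟩

lemma convex (h : IsSegment S) : Convex ℝ S := by
  obtain ⟨x, y, rfl⟩ := h
  exact convex_segment x y

lemma subset_or_subsingleton_inter (h : IsSegment S) (P : AffineSubspace ℝ E) :
    S ⊆ P ∨ (S ∩ P).Subsingleton := by
  obtain ⟨x, y, rfl⟩ := h
  exact segment_subset_or_subsingleton_inter P x y

end IsSegment

lemma exists_forall_mem_of_pairwise_inter_affineSpan_pair
    {u v : E} {s : Finset κ} {G : κ → Set E} (hG : ∀ i ∈ s, IsSegment (G i))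
    (hpair : ∀ i ∈ s, ∀ j ∈ s, i ≠ j → (G i ∩ G j ∩ line[ℝ, u, v]).Nonempty) :
    ∃ p, ∀ i ∈ s, p ∈ G i := by
  by_cases hflat : ∀ i ∈ s, G i ⊆ line[ℝ, u, v]
  · refine helly_affineSpan_pair hflat (fun i hi => (hG i hi).convex) fun i hi j hj => ?_
    by_cases hij : i = j
    · subst hij
      simpa using (hG i hi).nonempty
    · exact (hpair i hi j hj hij).mono inter_subset_left
  · push Not at hflat
    obtain ⟨i, hi, hni⟩ := hflat
    obtain ⟨p, hpi, hp⟩ := exists_mem_forall_mem_of_subsingleton_inter (hG i hi).nonempty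
      (((hG i hi).subset_or_subsingleton_inter _).resolve_left hni)
    refine ⟨p, fun j hj => ?_⟩
    by_cases hij : i = j
    · exact hij ▸ hpi
    · exact hp _ (by simpa only [inter_right_comm] using hpair i hi j hj hij)

variable {F : ι → Set E}

lemma pierceable_one_of_forall_inter_nonempty [Fintype ι] (hseg : ∀ i, IsSegment (F i))
    (hcard : 3 ≤ Fintype.card ι)
    (h3 : ∀ a b c, a ≠ b → a ≠ c → b ≠ c → (F a ∩ F b ∩ F c).Nonempty) : Pierceable F 1 := by
  obtain ⟨a⟩ : Nonempty ι := Fintype.card_pos_iff.1 (by omega)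
  obtain ⟨x, y, hFa⟩ := hseg a
  have hpair : ∀ i j, i ≠ j → (F i ∩ F j ∩ line[ℝ, x, y]).Nonempty := by
    intro i j hij
    -- chosen so that a common point of `F i`, `F j`, `F k` lies in `F a`, hence on the line
    obtain ⟨k, hki, hkj, hak⟩ : ∃ k, k ≠ i ∧ k ≠ j ∧ (a = i ∨ a = j ∨ a = k) := by
      by_cases ha : a = i ∨ a = j
      · obtain ⟨k, hki, hkj⟩ := ENat.exists_ne_ne_of_three_le
          (by simpa [ENat.card_eq_coe_fintype_card] using hcard) i j
        exact ⟨k, hki, hkj, by tauto⟩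
      · push Not at ha
        exact ⟨a, ha.1, ha.2, by tauto⟩
    obtain ⟨z, ⟨hzi, hzj⟩, hzk⟩ := h3 i j k hij (Ne.symm hki) (Ne.symm hkj)
    have hza : z ∈ F a := by rcases hak with rfl | rfl | rfl <;> assumption
    exact ⟨z, ⟨hzi, hzj⟩, segment_subset_affineSpan_pair x y (hFa ▸ hza)⟩
  obtain ⟨p, hp⟩ := exists_forall_mem_of_pairwise_inter_affineSpan_pair (s := Finset.univ)
    (fun i _ => hseg i) fun i _ j _ => hpair i j
  exact pierceable_one fun i => hp i (Finset.mem_univ i)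

lemma exists_forall_mem_of_inter_inter_eq_empty [Fintype ι] (hseg : ∀ i, IsSegment (F i))
    (h43 : HasFourThreeProperty F) {a b : ι} (hab : a ≠ b) (hne : (F a ∩ F b).Nonempty)
    {u v : E} (ha : F a ⊆ line[ℝ, u, v]) (hb : F b ⊆ line[ℝ, u, v]) :
    ∃ q, ∀ j, F a ∩ F b ∩ F j = ∅ → q ∈ F j := by
  classical
  have hpair : ∀ j j', F a ∩ F b ∩ F j = ∅ → F a ∩ F b ∩ F j' = ∅ → j ≠ j' →
      (F j ∩ F j' ∩ line[ℝ, u, v]).Nonempty := by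
    intro j j' hj hj' hjj'
    obtain ⟨hja, hjb⟩ := ne_of_inter_inter_eq_empty hne hj
    obtain ⟨hj'a, hj'b⟩ := ne_of_inter_inter_eq_empty hne hj'
    rcases h43.inter_nonempty hab hja.symm hj'a.symm hjb.symm hj'b.symm hjj'
      with h | h | ⟨z, ⟨hza, hzj⟩, hzj'⟩ | ⟨z, ⟨hzb, hzj⟩, hzj'⟩
    · exact absurd hj h.ne_empty
    · exact absurd hj' h.ne_empty
    · exact ⟨z, ⟨hzj, hzj'⟩, ha hza⟩
    · exact ⟨z, ⟨hzj, hzj'⟩, hb hzb⟩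
  obtain ⟨q, hq⟩ := exists_forall_mem_of_pairwise_inter_affineSpan_pair
    (s := Finset.univ.filter fun j => F a ∩ F b ∩ F j = ∅) (fun j _ => hseg j)
    fun j hj j' hj' => hpair j j' (Finset.mem_filter.1 hj).2 (Finset.mem_filter.1 hj').2
  exact ⟨q, fun j hj => hq j (Finset.mem_filter.2 ⟨Finset.mem_univ j, hj⟩)⟩

lemma exists_forall_mem_of_inter_inter_nonempty [Fintype ι] (hseg : ∀ i, IsSegment (F i))
    (h43 : HasFourThreeProperty F) {a b c : ι} (hac : a ≠ c) (habc : F a ∩ F b ∩ F c = ∅)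
    (hdisj : F a ∩ F c = ∅) {u v : E} (ha : F a ⊆ line[ℝ, u, v]) (hc : F c ⊆ line[ℝ, u, v]) :
    ∃ p, ∀ j, (F a ∩ F b ∩ F j).Nonempty → p ∈ F j := by
  classical
  have hpair : ∀ z z', (F a ∩ F b ∩ F z).Nonempty → (F a ∩ F b ∩ F z').Nonempty → z ≠ z' →
      (F z ∩ F z' ∩ line[ℝ, u, v]).Nonempty := by
    intro z z' hz hz' hzz'
    rcases inter_nonempty_of_inter_inter_nonempty h43 hac habc hz hz' hzz'
      with ⟨y, hy, hya⟩ | ⟨y, hy, hyc⟩ | ⟨y, ⟨-, hya⟩, hyc⟩ | ⟨y, ⟨-, hya⟩, hyc⟩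
    · exact ⟨y, hy, ha hya⟩
    · exact ⟨y, hy, hc hyc⟩
    all_goals exact (eq_empty_iff_forall_notMem.1 hdisj y ⟨hya, hyc⟩).elim
  obtain ⟨p, hp⟩ := exists_forall_mem_of_pairwise_inter_affineSpan_pair
    (s := Finset.univ.filter fun j => (F a ∩ F b ∩ F j).Nonempty) (fun j _ => hseg j)
    fun j hj j' hj' => hpair j j' (Finset.mem_filter.1 hj).2 (Finset.mem_filter.1 hj').2
  exact ⟨p, fun j hj => hp j (Finset.mem_filter.2 ⟨Finset.mem_univ j, hj⟩)⟩

lemma pierceable_two_of_subset_affineSpan_pair [Fintype ι] (hseg : ∀ i, IsSegment (F i))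
    (h43 : HasFourThreeProperty F) {a b c : ι} (hab : a ≠ b) (hac : a ≠ c) (hbc : b ≠ c)
    (habc : F a ∩ F b ∩ F c = ∅) (hne : (F a ∩ F b).Nonempty) {u v : E}
    (ha : F a ⊆ line[ℝ, u, v]) (hb : F b ⊆ line[ℝ, u, v]) (hc : F c ⊆ line[ℝ, u, v]) :
    Pierceable F 2 := by
  classical
  obtain ⟨q, hq⟩ := exists_forall_mem_of_inter_inter_eq_empty hseg h43 hab hne ha hb
  have hdisj : F a ∩ F c = ∅ ∨ F b ∩ F c = ∅ := by
    by_contra! ⟨hac', hbc'⟩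
    obtain ⟨x, hx⟩ := helly_affineSpan_pair (u := u) (v := v) (s := {a, b, c}) (S := F)
      (by simp [ha, hb, hc]) (by simp [(hseg _).convex]) (by
        simp only [Finset.mem_insert, Finset.mem_singleton]
        rintro i (rfl | rfl | rfl) j (rfl | rfl | rfl)
        all_goals first
          | simpa using (hseg _).nonempty
          | assumption
          | rw [inter_comm]; assumption)
    exact eq_empty_iff_forall_notMem.1 habc x ⟨⟨hx a (by simp), hx b (by simp)⟩, hx c (by simp)⟩
  obtain ⟨p, hp⟩ : ∃ p, ∀ j, (F a ∩ F b ∩ F j).Nonempty → p ∈ F j := by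
    rcases hdisj with h | h
    · exact exists_forall_mem_of_inter_inter_nonempty hseg h43 hac habc h ha hc
    · simpa only [inter_comm (F b)] using exists_forall_mem_of_inter_inter_nonempty hseg h43
        hbc (by rwa [inter_comm (F b)]) h hb hc
  refine pierceable_two q p fun j => ?_
  rcases (F a ∩ F b ∩ F j).eq_empty_or_nonempty with h | h
  exacts [.inl (hq j h), .inr (hp j h)]

end AddCommGroup

-- Take the interval whose right endpoint is leftmost: that endpoint lies in every interval
-- meeting it.
lemma exists_forall_rel_or_mem_real {s : Finset κ} {S : κ → Set ℝ}
    (hconv : ∀ i ∈ s, Convex ℝ (S i)) (hcpt : ∀ i ∈ s, IsCompact (S i)) {R : κ → κ → Prop}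
    (hR : ∀ i ∈ s, ∀ j ∈ s, ¬R i j → (S i ∩ S j).Nonempty) (hne : ∃ i ∈ s, (S i).Nonempty) :
    ∃ i ∈ s, (S i).Nonempty ∧ ∃ r, ∀ j ∈ s, R i j ∨ r ∈ S j := by
  classical
  obtain ⟨i, hi, hmin⟩ := Finset.exists_min_image (s.filter fun i => (S i).Nonempty)
    (fun i => sSup (S i)) (by simpa [Finset.filter_nonempty_iff] using hne)
  obtain ⟨his, hine⟩ := Finset.mem_filter.1 hi
  refine ⟨i, his, hine, sSup (S i), fun j hj => or_iff_not_imp_left.2 fun hij => ?_⟩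
  obtain ⟨y, hyi, hyj⟩ := hR i his j hj hij
  have hjne : (S j).Nonempty := ⟨y, hyj⟩
  exact (hconv j hj).ordConnected.out hyj ((hcpt j hj).sSup_mem hjne)
    ⟨le_csSup (hcpt i his).bddAbove hyi, hmin j (Finset.mem_filter.2 ⟨hj, hjne⟩)⟩

section Normed

variable [NormedAddCommGroup E] [NormedSpace ℝ E]

lemma IsSegment.isCompact {S : Set E} (h : IsSegment S) :
    IsCompact S := by
  obtain ⟨x, y, rfl⟩ := h
  rw [segment_eq_image_lineMap]
  exact isCompact_Icc.image AffineMap.lineMap_continuous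

lemma exists_forall_rel_or_mem_of_subset_segment
    {x y : E} {s : Finset κ} {S : κ → Set E} (hsub : ∀ i ∈ s, S i ⊆ segment ℝ x y)
    (hconv : ∀ i ∈ s, Convex ℝ (S i)) (hclosed : ∀ i ∈ s, IsClosed (S i)) {R : κ → κ → Prop}
    (hR : ∀ i ∈ s, ∀ j ∈ s, ¬R i j → (S i ∩ S j).Nonempty) (hne : ∃ i ∈ s, (S i).Nonempty) :
    ∃ i ∈ s, (S i).Nonempty ∧ ∃ r, ∀ j ∈ s, R i j ∨ r ∈ S j := by
  let T i := Icc (0 : ℝ) 1 ∩ AffineMap.lineMap x y ⁻¹' S i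
  have hlift : ∀ i ∈ s, ∀ z ∈ S i, ∃ t ∈ T i, AffineMap.lineMap x y t = z := fun i hi z hz => by
    obtain ⟨t, ht, rfl⟩ := (segment_eq_image_lineMap ℝ x y ▸ hsub i hi) hz
    exact ⟨t, ⟨ht, hz⟩, rfl⟩
  obtain ⟨i, hi, ⟨t, ht⟩, r, hr⟩ := exists_forall_rel_or_mem_real (S := T)
    (fun i hi => (convex_Icc 0 1).inter ((hconv i hi).affine_preimage _))
    (fun i hi => isCompact_Icc.inter_right ((hclosed i hi).preimage AffineMap.lineMap_continuous))
    (fun i hi j hj hij => by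
      obtain ⟨z, hzi, hzj⟩ := hR i hi j hj hij
      obtain ⟨t, ht, rfl⟩ := hlift i hi z hzi
      exact ⟨t, ht, ht.1, hzj⟩)
    (by
      obtain ⟨i, hi, z, hz⟩ := hne
      obtain ⟨t, ht, -⟩ := hlift i hi z hz
      exact ⟨i, hi, t, ht⟩)
  exact ⟨i, hi, ⟨_, ht.2⟩, AffineMap.lineMap x y r, fun j hj => (hr j hj).imp_right And.right⟩

variable {F : ι → Set E}

lemma pierceable_three_of_not_subset_affineSpan_pair [Fintype ι] (hseg : ∀ i, IsSegment (F i))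
    (h43 : HasFourThreeProperty F) {a b c : ι} (hab : a ≠ b) (hac : a ≠ c) (hbc : b ≠ c)
    (habc : F a ∩ F b ∩ F c = ∅) (hne : (F a ∩ F b).Nonempty) {u v : E}
    (ha : F a ⊆ line[ℝ, u, v]) (hb : F b ⊆ line[ℝ, u, v]) (hc : ¬F c ⊆ line[ℝ, u, v]) :
    Pierceable F 3 := by
  classical
  obtain ⟨q, hqc, hq⟩ := exists_mem_forall_mem_of_subsingleton_inter (hseg c).nonempty
    (((hseg c).subset_or_subsingleton_inter _).resolve_left hc)
  set s := Finset.univ.filter fun j => (F a ∩ F b ∩ F j).Nonempty ∧ q ∉ F j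
  have hs : ∀ j ∉ s, q ∈ F j := fun j hj => by
    simp only [s, Finset.mem_filter, Finset.mem_univ, true_and, not_and, not_not] at hj
    rcases (F a ∩ F b ∩ F j).eq_empty_or_nonempty with h | h
    exacts [forall_mem_of_inter_inter_eq_empty h43 hab hac hbc habc hne ha hb hqc hq h, hj h]
  have hpair : ∀ z ∈ s, ∀ z' ∈ s, z ≠ z' → (F z ∩ F z' ∩ line[ℝ, u, v]).Nonempty ∨
      (F z ∩ F c ∩ (F z' ∩ F c)).Nonempty := fun z hz z' hz' hzz' =>
    inter_nonempty_or_of_notMem h43 hac habc ha hq (Finset.mem_filter.1 hz).2.1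
      (Finset.mem_filter.1 hz').2.1 (Finset.mem_filter.1 hz).2.2 (Finset.mem_filter.1 hz').2.2 hzz'
  by_cases hS : ∀ i ∈ s, F i ∩ F c = ∅
  · obtain ⟨p, hp⟩ := exists_forall_mem_of_pairwise_inter_affineSpan_pair (fun j _ => hseg j)
      fun z hz z' hz' hzz' => (hpair z hz z' hz' hzz').resolve_right
        fun ⟨y, hy, _⟩ => eq_empty_iff_forall_notMem.1 (hS z hz) y hy
    refine (pierceable_two q p fun j => ?_).mono (by norm_num)
    by_cases hj : j ∈ s
    exacts [.inr (hp j hj), .inl (hs j hj)]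
  push Not at hS
  obtain ⟨x, y, hFc⟩ := hseg c
  obtain ⟨i, hi, ⟨w, hwi, hwc⟩, r, hr⟩ := exists_forall_rel_or_mem_of_subset_segment
    (S := fun j => F j ∩ F c) (R := fun i j => (F i ∩ F j ∩ line[ℝ, u, v]).Nonempty)
    (fun j _ => inter_subset_right.trans hFc.subset)
    (fun j _ => (hseg j).convex.inter (hseg c).convex)
    (fun j _ => (hseg j).isCompact.isClosed.inter (hseg c).isCompact.isClosed)
    (fun i hi j hj hij => by
      rcases eq_or_ne i j with rfl | hij'
      · obtain ⟨y, ⟨hya, -⟩, hyi⟩ := (Finset.mem_filter.1 hi).2.1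
        exact absurd ⟨y, ⟨hyi, hyi⟩, ha hya⟩ hij
      · exact (hpair i hi j hj hij').resolve_left hij) hS
  have hiL : ¬F i ⊆ line[ℝ, u, v] := fun h =>
    (Finset.mem_filter.1 hi).2.2 (hq _ ⟨w, ⟨hwc, h hwi⟩, hwi⟩)
  obtain ⟨t, -, ht⟩ := exists_mem_forall_mem_of_subsingleton_inter (hseg i).nonempty
    (((hseg i).subset_or_subsingleton_inter _).resolve_left hiL)
  refine pierceable_three q t r fun j => ?_
  by_cases hj : j ∈ s
  · rcases hr j hj with h | h
    · exact .inr (.inl (ht _ (by rwa [inter_right_comm])))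
    · exact .inr (.inr h.1)
  · exact .inl (hs j hj)

lemma pierceable_three_of_inter_nontrivial [Fintype ι] (hseg : ∀ i, IsSegment (F i))
    (h43 : HasFourThreeProperty F) {a b c : ι} (hab : a ≠ b) (hac : a ≠ c) (hbc : b ≠ c)
    (habc : F a ∩ F b ∩ F c = ∅) (hnt : (F a ∩ F b).Nontrivial) : Pierceable F 3 := by
  obtain ⟨z₀, hz₀, z₁, hz₁, hz⟩ := hnt
  have hline : ∀ i, z₀ ∈ F i → z₁ ∈ F i → F i ⊆ line[ℝ, z₀, z₁] := fun i h₀ h₁ =>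
    ((hseg i).subset_or_subsingleton_inter _).resolve_right fun h =>
      hz (h ⟨h₀, left_mem_affineSpan_pair ℝ z₀ z₁⟩ ⟨h₁, right_mem_affineSpan_pair ℝ z₀ z₁⟩)
  have ha := hline a hz₀.1 hz₁.1
  have hb := hline b hz₀.2 hz₁.2
  by_cases hc : F c ⊆ line[ℝ, z₀, z₁]
  · exact (pierceable_two_of_subset_affineSpan_pair hseg h43 hab hac hbc habc ⟨z₀, hz₀⟩ ha hb
      hc).mono (by norm_num)
  · exact pierceable_three_of_not_subset_affineSpan_pair hseg h43 hab hac hbc habc ⟨z₀, hz₀⟩ ha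
      hb hc

end Normed

end

theorem kyncl_tancer_segments_general {d : ℕ} {ι : Type*} [Fintype ι]
    (F : ι → Set (Fin d → ℝ))
    (hseg : ∀ i, ∃ x y : Fin d → ℝ, F i = segment ℝ x y)
    (h43 : ∀ P : Finset ι, P.card = 4 →
      ∃ Q ⊆ P, Q.card = 3 ∧ (⋂ i ∈ Q, F i).Nonempty) :
    ∃ C : Finset (Fin d → ℝ), C.card ≤ 3 ∧ ∀ i, ∃ x ∈ C, x ∈ F i := by
  have hne : ∀ i, (F i).Nonempty := fun i => IsSegment.nonempty (hseg i)
  rcases le_or_gt (Fintype.card ι) 3 with hcard | hcard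
  · exact pierceable_of_card_le hne hcard
  by_cases h3 : ∀ a b c, a ≠ b → a ≠ c → b ≠ c → (F a ∩ F b ∩ F c).Nonempty
  · exact (pierceable_one_of_forall_inter_nonempty hseg hcard.le h3).mono (by norm_num)
  push Not at h3
  obtain ⟨a, b, c, hab, hac, hbc, habc⟩ := h3
  by_cases hsab : (F a ∩ F b).Subsingleton
  · by_cases hsbc : (F b ∩ F c).Subsingleton
    · by_cases hsca : (F c ∩ F a).Subsingleton
      · exact pierceable_three_of_subsingleton_inter hne h43 hab hac hbc habc hsab hsbc hsca
      · exact pierceable_three_of_inter_nontrivial hseg h43 (Ne.symm hac) (Ne.symm hbc) hab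
          (by rw [← habc]; ac_rfl) (not_subsingleton_iff.1 hsca)
    · exact pierceable_three_of_inter_nontrivial hseg h43 hbc (Ne.symm hab) (Ne.symm hac)
        (by rw [← habc]; ac_rfl) (not_subsingleton_iff.1 hsbc)
  · exact pierceable_three_of_inter_nontrivial hseg h43 hab hac hbc habc
      (not_subsingleton_iff.1 hsab)

/-- Kynčl–Tancer: a finite family of closed line segments in `ℝ^d` with the
`(4,3)`-property can be pierced by at most `3` points. -/
theorem kyncl_tancer_segments {d : ℕ} (hd : 1 ≤ d) {ι : Type*} [Fintype ι]
    (F : ι → Set (Fin d → ℝ))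
    (hseg : ∀ i, ∃ x y : Fin d → ℝ, F i = segment ℝ x y)
    (h43 : ∀ P : Finset ι, P.card = 4 →
      ∃ Q ⊆ P, Q.card = 3 ∧ (⋂ i ∈ Q, F i).Nonempty) :
    ∃ C : Finset (Fin d → ℝ), C.card ≤ 3 ∧ ∀ i, ∃ x ∈ C, x ∈ F i :=
  kyncl_tancer_segments_general F hseg h43
end

section
/- Let d ≥ 1 and let p, q be integers with 2 ≤ q ≤ p ≤ 2q - 2. Let F : Fin n → Set (ℝ^d) be a family of n ≥ p nonempty axis-parallel boxes in ℝ^d such that for every p-element subset P of the indices there exist q indices in P whose boxes have a common point. Then there exists a point x ∈ ℝ^d such that the number of indices i with x ∈ F i is at least n - (p - q). -/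
/-!
Boxes are order intervals `Icc a b` of `Fin d → ℝ`, so pairwise intersecting boxes share a point,
the supremum of their lower corners. It therefore suffices to find `n - (p - q)` pairwise
intersecting boxes, i.e. an independent set of that size in the disjointness graph.

Suppose a maximum independent set `I` is smaller, and take a set `R` of `p - q + 1` vertices
outside `I`. By maximality of `I`, every independent `T ⊆ R` has at least `#T` neighbours in `I`
(Hall's condition). Sets `T` with exactly `#T` neighbours are closed under union by
submodularity, and it follows that a minimal `B₀ ⊆ I` satisfying Hall's condition has
`#B₀ ≤ #R ≤ q - 1`. Padding `B₀` to a `(q - 1)`-subset `B` of `I`, the `p`-set `R ∪ B` contains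
no independent `q`-set: the part of such a set in `R` has at least as many neighbours in `B`
as elements, and those neighbours are not in the set.
-/

open Finset

section HallCondition

variable {α β : Type*} (r : α → β → Prop)

open Classical in
noncomputable def relNbhd (B : Finset β) (T : Finset α) : Finset β :=
  B.filter fun x => ∃ w ∈ T, r w x

def HallCondition (𝒟 : Finset α → Prop) (B : Finset β) : Prop :=
  ∀ T, 𝒟 T → #T ≤ #(relNbhd r B T)

variable {r} {𝒟 : Finset α → Prop} {B B' : Finset β} {T U : Finset α}

@[simp]
theorem mem_relNbhd {x : β} : x ∈ relNbhd r B T ↔ x ∈ B ∧ ∃ w ∈ T, r w x := by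
  classical
  simp [relNbhd]

theorem relNbhd_subset : relNbhd r B T ⊆ B := fun _ hx => (mem_relNbhd.1 hx).1

theorem relNbhd_mono (h : B ⊆ B') : relNbhd r B T ⊆ relNbhd r B' T := fun _ hx =>
  mem_relNbhd.2 ⟨h (mem_relNbhd.1 hx).1, (mem_relNbhd.1 hx).2⟩

theorem HallCondition.mono (hB : HallCondition r 𝒟 B) (h : B ⊆ B') : HallCondition r 𝒟 B' :=
  fun T hT => (hB T hT).trans (card_le_card (relNbhd_mono h))

variable [DecidableEq β]

theorem relNbhd_erase (b : β) : relNbhd r (B.erase b) T = (relNbhd r B T).erase b := by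
  ext x
  simp only [mem_relNbhd, mem_erase]
  tauto

theorem Minimal.exists_tight_mem_relNbhd (hB : Minimal (HallCondition r 𝒟) B) {b : β}
    (hb : b ∈ B) : ∃ T, 𝒟 T ∧ #(relNbhd r B T) ≤ #T ∧ b ∈ relNbhd r B T := by
  have hnot : ¬ HallCondition r 𝒟 (B.erase b) := hB.not_prop_of_lt (erase_ssubset hb)
  simp only [HallCondition, not_forall, not_le, exists_prop] at hnot
  obtain ⟨T, hT, hlt⟩ := hnot
  rw [relNbhd_erase] at hlt
  have hle := hB.prop T hT
  have hbT : b ∈ relNbhd r B T := by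
    by_contra hbT
    rw [erase_eq_of_notMem hbT] at hlt
    omega
  have := card_erase_of_mem hbT
  exact ⟨T, hT, by omega, hbT⟩

variable [DecidableEq α]

theorem relNbhd_union : relNbhd r B (T ∪ U) = relNbhd r B T ∪ relNbhd r B U := by
  ext x
  simp only [mem_relNbhd, mem_union]
  grind

theorem relNbhd_inter_subset : relNbhd r B (T ∩ U) ⊆ relNbhd r B T ∩ relNbhd r B U := by
  intro x
  simp only [mem_relNbhd, mem_inter]
  grind

-- Submodularity of `T ↦ #(relNbhd r B T)`.
theorem card_relNbhd_union_le (hTU : #(T ∩ U) ≤ #(relNbhd r B (T ∩ U)))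
    (hT : #(relNbhd r B T) ≤ #T) (hU : #(relNbhd r B U) ≤ #U) :
    #(relNbhd r B (T ∪ U)) ≤ #(T ∪ U) := by
  have hN := card_union_add_card_inter (relNbhd r B T) (relNbhd r B U)
  have hTU' := card_union_add_card_inter T U
  have hinter := card_le_card (relNbhd_inter_subset (r := r) (B := B) (T := T) (U := U))
  rw [relNbhd_union]
  omega

theorem card_relNbhd_biUnion_le {γ : Type*} [DecidableEq γ]
    (hdown : ∀ ⦃T T'⦄, 𝒟 T → T' ⊆ T → 𝒟 T') (hB : HallCondition r 𝒟 B)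
    {S : γ → Finset α} (C : Finset γ) (hC : ∀ c ∈ C, 𝒟 (S c) ∧ #(relNbhd r B (S c)) ≤ #(S c)) :
    #(relNbhd r B (C.biUnion S)) ≤ #(C.biUnion S) := by
  induction C using Finset.induction_on with
  | empty => simp [relNbhd]
  | insert c C _ ih =>
    obtain ⟨hSc, hScN⟩ := hC c (mem_insert_self c C)
    rw [biUnion_insert]
    exact card_relNbhd_union_le (hB _ (hdown hSc inter_subset_left)) hScN
      (ih fun c' hc' => hC c' (mem_insert_of_mem hc'))

theorem Minimal.card_le_of_hallCondition {R : Finset α} (hdown : ∀ ⦃T T'⦄, 𝒟 T → T' ⊆ T → 𝒟 T')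
    (hR : ∀ ⦃T⦄, 𝒟 T → T ⊆ R) (hB : Minimal (HallCondition r 𝒟) B) : #B ≤ #R := by
  choose! S hS hSN hbS using fun b (hb : b ∈ B) => hB.exists_tight_mem_relNbhd hb
  have hcover : B ⊆ relNbhd r B (B.biUnion S) := fun b hb => by
    obtain ⟨-, w, hw, hwb⟩ := mem_relNbhd.1 (hbS b hb)
    exact mem_relNbhd.2 ⟨hb, w, mem_biUnion.2 ⟨b, hb, hw⟩, hwb⟩
  calc #B ≤ #(relNbhd r B (B.biUnion S)) := card_le_card hcover
    _ ≤ #(B.biUnion S) :=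
      card_relNbhd_biUnion_le hdown hB.prop B fun b hb => ⟨hS b hb, hSN b hb⟩
    _ ≤ #R := card_le_card (biUnion_subset.2 fun b hb => hR (hS b hb))

end HallCondition

namespace SimpleGraph

variable {V : Type*} [DecidableEq V] {G : SimpleGraph V}

theorem IsMaximumIndepSet.hallCondition [Fintype V] {I : Finset V} (hI : G.IsMaximumIndepSet I) :
    HallCondition G.Adj (fun T => G.IsIndepSet T ∧ Disjoint T I) I := by
  rintro T ⟨hT, hTI⟩
  by_contra! hlt
  set J := T ∪ (I \ relNbhd G.Adj I T)
  have hJ : G.IsIndepSet (J : Set V) := by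
    rw [coe_union, IsIndepSet, Set.pairwise_union]
    refine ⟨hT, hI.isIndepSet.mono (by simp), fun v hv w hw _ => ?_⟩
    simp only [coe_sdiff, Set.mem_sdiff, mem_coe, mem_relNbhd, not_and, not_exists] at hw
    exact ⟨hw.2 hw.1 v hv, fun hwv => hw.2 hw.1 v hv hwv.symm⟩
  have hJcard : #J = #T + (#I - #(relNbhd G.Adj I T)) := by
    rw [card_union_of_disjoint (hTI.mono_right sdiff_subset), card_sdiff_of_subset relNbhd_subset]
  have := hI.maximum J hJ
  have := card_le_card (relNbhd_subset (r := G.Adj) (B := I) (T := T))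
  omega

theorem IsIndepSet.card_le_of_hallCondition {Q R B : Finset V} (hQ : G.IsIndepSet (Q : Set V))
    (hQRB : Q ⊆ R ∪ B) (hB : HallCondition G.Adj (fun T => T ⊆ R ∧ G.IsIndepSet T) B) :
    #Q ≤ #B := by
  have hR : #(Q ∩ R) ≤ #(relNbhd G.Adj B (Q ∩ R)) :=
    hB _ ⟨inter_subset_right, hQ.mono (by simp)⟩
  have hdisj : Disjoint (Q \ R) (relNbhd G.Adj B (Q ∩ R)) := by
    refine Finset.disjoint_left.2 fun x hx hxN => ?_
    obtain ⟨-, w, hw, hwx⟩ := mem_relNbhd.1 hxN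
    rw [mem_sdiff] at hx
    rw [mem_inter] at hw
    exact hQ hw.1 hx.1 (fun h => hx.2 (h ▸ hw.2)) hwx
  have hsub : Q \ R ∪ relNbhd G.Adj B (Q ∩ R) ⊆ B :=
    union_subset (fun x hx => by grind) relNbhd_subset
  have := card_le_card hsub
  rw [card_union_of_disjoint hdisj] at this
  have := card_inter_add_card_sdiff Q R
  omega

theorem card_sub_le_indepNum [Fintype V] {p q : ℕ} (hqp : q ≤ p) (hpq : p + 2 ≤ 2 * q)
    (hn : p ≤ Fintype.card V)
    (h : ∀ P : Finset V, #P = p → ∃ Q ⊆ P, #Q = q ∧ G.IsIndepSet (Q : Set V)) :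
    Fintype.card V - (p - q) ≤ G.indepNum := by
  obtain ⟨I, hI⟩ := G.maximumIndepSet_exists
  rw [← maximumIndepSet_card_eq_indepNum I hI]
  by_contra! hsmall
  have hqI : q ≤ #I := by
    obtain ⟨P, -, hP⟩ := exists_subset_card_eq (s := (univ : Finset V)) (by simpa using hn)
    obtain ⟨Q, -, hQ, hQind⟩ := h P hP
    exact hQ ▸ hI.maximum Q hQind
  obtain ⟨R, hR_sub, hR⟩ := exists_subset_card_eq (s := univ \ I) (n := p - q + 1) (by
    rw [card_sdiff_of_subset (subset_univ I), card_univ]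
    omega)
  have hRI : Disjoint R I := disjoint_of_subset_left hR_sub sdiff_disjoint
  have hdown : ∀ ⦃T T' : Finset V⦄, T ⊆ R ∧ G.IsIndepSet T → T' ⊆ T → T' ⊆ R ∧ G.IsIndepSet T' :=
    fun T T' hT hT' => ⟨hT'.trans hT.1, hT.2.mono (by simpa using hT')⟩
  obtain ⟨B₀, hB₀I, hB₀⟩ := exists_minimal_le_of_wellFoundedLT
    (HallCondition G.Adj fun T => T ⊆ R ∧ G.IsIndepSet T) I
    fun T hT => hI.hallCondition T ⟨hT.2, disjoint_of_subset_left hT.1 hRI⟩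
  have hB₀R := hB₀.card_le_of_hallCondition hdown fun _ hT => hT.1
  obtain ⟨B, hB₀B, hBI, hB⟩ := exists_subsuperset_card_eq hB₀I (n := q - 1) (by omega) (by omega)
  obtain ⟨Q, hQP, hQ, hQind⟩ := h (R ∪ B) (by
    rw [card_union_of_disjoint (disjoint_of_subset_right hBI hRI)]
    omega)
  have := hQind.card_le_of_hallCondition hQP (hB₀.prop.mono hB₀B)
  omega

end SimpleGraph

theorem Finset.exists_forall_mem_Icc_of_pairwise_not_disjoint {ι α : Type*} [SemilatticeSup α]
    {S : Finset ι} (hS : S.Nonempty) {a b : ι → α} (hab : ∀ i ∈ S, a i ≤ b i)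
    (h : (S : Set ι).Pairwise fun i j => ¬Disjoint (Set.Icc (a i) (b i)) (Set.Icc (a j) (b j))) :
    ∃ x, ∀ i ∈ S, x ∈ Set.Icc (a i) (b i) := by
  refine ⟨S.sup' hS a, fun i hi => ⟨le_sup' a hi, sup'_le hS a fun j hj => ?_⟩⟩
  obtain rfl | hji := eq_or_ne j i
  · exact hab j hj
  · obtain ⟨x, hxj, hxi⟩ := Set.not_disjoint_iff.1 (h hj hi hji)
    exact hxj.1.trans hxi.2

theorem agreeable_box_society_general {d p q n : ℕ} (hq : 2 ≤ q) (hqp : q ≤ p)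
    (hp2q : p ≤ 2 * q - 2) (hn : p ≤ n)
    (F : Fin n → Set (Fin d → ℝ))
    (hbox : ∀ i, ∃ a b : Fin d → ℝ, (∀ j, a j ≤ b j) ∧
      F i = Set.univ.pi fun j => Set.Icc (a j) (b j))
    (hagree : ∀ P : Finset (Fin n), P.card = p →
      ∃ Q ⊆ P, Q.card = q ∧ (⋂ i ∈ Q, F i).Nonempty) :
    ∃ x : Fin d → ℝ,
      (n : ℝ) - ((p : ℝ) - (q : ℝ)) ≤ (Set.ncard {i : Fin n | x ∈ F i} : ℝ) := by
  choose a b hab hF using hbox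
  simp only [Set.pi_univ_Icc] at hF
  let G := SimpleGraph.fromRel fun i j => Disjoint (F i) (F j)
  have hindep : ∀ Q : Finset (Fin n), (⋂ i ∈ Q, F i).Nonempty → G.IsIndepSet (Q : Set (Fin n)) := by
    rintro Q ⟨x, hx⟩ i hi j hj - hadj
    rw [Set.mem_iInter₂] at hx
    have hij : ¬Disjoint (F i) (F j) := Set.not_disjoint_iff.2 ⟨x, hx i hi, hx j hj⟩
    exact hadj.2.elim hij fun hji => hij hji.symm
  obtain ⟨S, hS⟩ := G.maximumIndepSet_exists
  have hS_card : n - (p - q) ≤ #S :=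
    calc n - (p - q) = Fintype.card (Fin n) - (p - q) := by rw [Fintype.card_fin]
      _ ≤ G.indepNum := G.card_sub_le_indepNum hqp (by omega) (by simpa using hn) fun P hP => by
        obtain ⟨Q, hQP, hQ, hQF⟩ := hagree P hP
        exact ⟨Q, hQP, hQ, hindep Q hQF⟩
      _ = #S := (G.maximumIndepSet_card_eq_indepNum S hS).symm
  obtain ⟨x, hx⟩ : ∃ x, ∀ i ∈ S, x ∈ F i := by
    simp only [hF]
    refine exists_forall_mem_Icc_of_pairwise_not_disjoint (card_pos.1 (by omega))
      (fun i _ => hab i) fun i hi j hj hij hdisj => ?_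
    exact hS.isIndepSet hi hj hij ⟨hij, Or.inl (by simpa only [hF] using hdisj)⟩
  refine ⟨x, ?_⟩
  have hx_card : #S ≤ Set.ncard {i | x ∈ F i} := Set.ncard_coe_finset S ▸ Set.ncard_le_ncard hx
  rw [← Nat.cast_sub hqp, ← Nat.cast_sub (by omega)]
  exact_mod_cast hS_card.trans hx_card

/-- Berg et al.: a `(q,p)`-agreeable `ℝ^d`-box society with `n` voters and
`2 ≤ q ≤ p ≤ 2q - 2` has a point contained in at least `n - (p - q)` approval sets. -/
theorem agreeable_box_society {d p q n : ℕ} (hd : 1 ≤ d) (hq : 2 ≤ q) (hqp : q ≤ p)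
    (hp2q : p ≤ 2 * q - 2) (hn : p ≤ n)
    (F : Fin n → Set (Fin d → ℝ))
    (hbox : ∀ i, ∃ a b : Fin d → ℝ, (∀ j, a j ≤ b j) ∧
      F i = Set.univ.pi fun j => Set.Icc (a j) (b j))
    (hagree : ∀ P : Finset (Fin n), P.card = p →
      ∃ Q ⊆ P, Q.card = q ∧ (⋂ i ∈ Q, F i).Nonempty) :
    ∃ x : Fin d → ℝ,
      (n : ℝ) - ((p : ℝ) - (q : ℝ)) ≤ (Set.ncard {i : Fin n | x ∈ F i} : ℝ) :=
  agreeable_box_society_general hq hqp hp2q hn F hbox hagree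
end

section
/- Let p ≥ 2 and let F be a finite family of nonempty closed bounded intervals in ℝ satisfying the (p,2)-property: among every p members of F there exist 2 with a common point. Then F has a piercing set of at most p - 1 points. -/
/-!
Greedy piercing: let `b₀` be the smallest right endpoint. The point `b₀` pierces every interval
containing it, and each remaining interval lies strictly to the right of `b₀`, hence is disjoint
from the interval ending at `b₀`. So among any `p - 1` remaining intervals together with that one,
the intersecting pair avoids it: the remaining intervals have the `(p - 1, 2)`-property, and
induction on `p` finishes.
-/

section

open Finset Set

variable {ι α : Type*}

def HasPQProperty (F : ι → Set α) (s : Finset ι) (p q : ℕ) : Prop :=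
  ∀ P ⊆ s, P.card = p → ∃ Q ⊆ P, Q.card = q ∧ (⋂ i ∈ Q, F i).Nonempty

namespace HasPQProperty

variable {F : ι → Set α} {s t : Finset ι} {p q : ℕ}

theorem not_zero (hq : q ≠ 0) : ¬HasPQProperty F s 0 q := fun h ↦ by
  obtain ⟨Q, hQ, hQq, -⟩ := h ∅ (empty_subset s) Finset.card_empty
  rw [subset_empty.1 hQ, Finset.card_empty] at hQq
  exact hq hQq.symm

theorem mono (h : HasPQProperty F s p q) (hts : t ⊆ s) : HasPQProperty F t p q :=
  fun P hP ↦ h P (hP.trans hts)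

theorem of_insert_of_disjoint [DecidableEq ι] {i₀ : ι}
    (h : HasPQProperty F (insert i₀ t) (p + 1) q) (hq : 2 ≤ q) (hi₀ : i₀ ∉ t)
    (hdisj : ∀ j ∈ t, Disjoint (F i₀) (F j)) : HasPQProperty F t p q := by
  intro P hPt hP
  have hi₀P : i₀ ∉ P := fun hi ↦ hi₀ (hPt hi)
  obtain ⟨Q, hQ, hQq, x, hx⟩ :=
    h (insert i₀ P) (insert_subset_insert i₀ hPt) (by rw [card_insert_of_notMem hi₀P, hP])
  refine ⟨Q, fun j hj ↦ ?_, hQq, x, hx⟩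
  obtain ⟨k, hkQ, hki₀⟩ := Q.exists_mem_ne (by omega) i₀
  have hkP : k ∈ P := (mem_insert.1 (hQ hkQ)).resolve_left hki₀
  have hxk : x ∈ F k := mem_iInter₂.1 hx k hkQ
  rcases mem_insert.1 (hQ hj) with rfl | hjP
  · exact absurd (hdisj k (hPt hkP)) (not_disjoint_iff.2 ⟨x, mem_iInter₂.1 hx j hj, hxk⟩)
  · exact hjP

end HasPQProperty

theorem disjoint_Icc_of_le_of_notMem [LinearOrder α] {a₀ b₀ a b : α} (hb : b₀ ≤ b)
    (hb₀ : b₀ ∉ Icc a b) : Disjoint (Icc a₀ b₀) (Icc a b) := by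
  have hb₀a : b₀ < a := lt_of_not_ge fun ha ↦ hb₀ ⟨ha, hb⟩
  exact Set.disjoint_left.2 fun x hx hx' ↦ (hx.2.trans_lt hb₀a).not_ge hx'.1

theorem exists_card_lt_piercing_Icc [LinearOrder α] (a b : ι → α) (hab : ∀ i, a i ≤ b i)
    {p : ℕ} (s : Finset ι) (h : HasPQProperty (fun i ↦ Icc (a i) (b i)) s p 2) :
    ∃ C : Finset α, C.card < p ∧ ∀ i ∈ s, ∃ x ∈ C, x ∈ Icc (a i) (b i) := by
  classical
  induction p generalizing s with
  | zero => exact (HasPQProperty.not_zero two_ne_zero h).elim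
  | succ p ih =>
    rcases s.eq_empty_or_nonempty with rfl | hs
    · exact ⟨∅, by simp, by simp⟩
    obtain ⟨i₀, hi₀, hmin⟩ := s.exists_min_image b hs
    set t := s.filter fun j ↦ b i₀ ∉ Icc (a j) (b j)
    have ht : HasPQProperty (fun i ↦ Icc (a i) (b i)) t p 2 :=
      (h.mono (insert_subset hi₀ (filter_subset _ s))).of_insert_of_disjoint le_rfl
        (by simp [hab]) fun j hj ↦
          disjoint_Icc_of_le_of_notMem (hmin j (mem_of_mem_filter j hj)) (mem_filter.1 hj).2
    obtain ⟨C, hC, hpierce⟩ := ih t ht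
    refine ⟨insert (b i₀) C, (card_insert_le _ _).trans_lt (by omega), fun i hi ↦ ?_⟩
    by_cases hbi : b i₀ ∈ Icc (a i) (b i)
    · exact ⟨b i₀, mem_insert_self _ _, hbi⟩
    · obtain ⟨x, hxC, hx⟩ := hpierce i (mem_filter.2 ⟨hi, hbi⟩)
      exact ⟨x, mem_insert_of_mem hxC, hx⟩

end

theorem gallai_intervals_general {p : ℕ} {ι : Type*} [Fintype ι]
    (F : ι → Set ℝ) (hint : ∀ i, ∃ a b : ℝ, a ≤ b ∧ F i = Set.Icc a b)
    (hp2 : ∀ P : Finset ι, P.card = p →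
      ∃ Q ⊆ P, Q.card = 2 ∧ (⋂ i ∈ Q, F i).Nonempty) :
    ∃ C : Finset ℝ, C.card ≤ p - 1 ∧ ∀ i, ∃ x ∈ C, x ∈ F i := by
  choose a b hab hF using hint
  obtain rfl : F = fun i ↦ Set.Icc (a i) (b i) := funext hF
  obtain ⟨C, hC, hpierce⟩ :=
    exists_card_lt_piercing_Icc a b hab (s := Finset.univ) fun P _ hP ↦ hp2 P hP
  exact ⟨C, by omega, fun i ↦ hpierce i (Finset.mem_univ i)⟩

/-- Gallai's theorem: a finite family of nonempty closed bounded intervals in `ℝ` with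
the `(p,2)`-property can be pierced by at most `p - 1` points. -/
theorem gallai_intervals {p : ℕ} (hp : 2 ≤ p) {ι : Type*} [Fintype ι]
    (F : ι → Set ℝ) (hint : ∀ i, ∃ a b : ℝ, a ≤ b ∧ F i = Set.Icc a b)
    (hp2 : ∀ P : Finset ι, P.card = p →
      ∃ Q ⊆ P, Q.card = 2 ∧ (⋂ i ∈ Q, F i).Nonempty) :
    ∃ C : Finset ℝ, C.card ≤ p - 1 ∧ ∀ i, ∃ x ∈ C, x ∈ F i :=
  gallai_intervals_general F hint hp2
end

section
/- Let d ≥ 1 and p ≥ q ≥ 2 be integers, and let F be a finite family of d-intervals in ℝ satisfying the (p,q)-property: among every p members of F there exist q with a common point. Then F has a piercing set of cardinality at most max{ (2(e·p)^(q/(q-1))/q) · d^(q/(q-1)) + d , 2p²d }, where e is Euler's number. -/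
/-- `S` is a `d`-interval: a nonempty union of at most `d` pairwise disjoint nonempty
closed bounded intervals in `ℝ`. -/
def IsDInterval (d : ℕ) (S : Set ℝ) : Prop :=
  S.Nonempty ∧ ∃ (k : ℕ) (a b : Fin k → ℝ), k ≤ d ∧ (∀ i, a i ≤ b i) ∧
    (Pairwise fun i j => Disjoint (Set.Icc (a i) (b i)) (Set.Icc (a j) (b j))) ∧
    S = ⋃ i, Set.Icc (a i) (b i)

/-!
Let `L i` be the left endpoints of the components of `F i`. If some members of `F` share a
point `x`, the rightmost of their left endpoints below `x` lies in all of them (`HasPivots`).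

By the minimax theorem there are a fractional matching `z` of `F`, with load at most `1` at every
left endpoint, and a fractional cover `y` by left endpoints, of the same total weight `m`.

Weight each `f : Fin p → ι` by `∏ j, z (f j)`; the total weight is `m ^ p`. By the
`(p,q)`-property every injective `f` has `q` coordinates whose members contain a left endpoint of
one of them. The non-injective tuples weigh at most `p² m^(p-1)`, the others at most
`(p choose q) q d m^(p-q+1)`, and comparing with `m ^ p` bounds `m`.

Each `F i` has a component of `y`-weight at least `1 / d`; stabbing these intervals greedily by
right endpoints uses pairwise disjoint ones, hence at most `d m` points.
-/

open Finset
open scoped Classical Nat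

-- The decidability instances are left to unification, so that the lemma applies to filters
-- whichever instances they were elaborated with.
theorem sum_filter_le_sum_sum_filter {β κ : Type*} [Fintype β] {w : β → ℝ} (hw : ∀ b, 0 ≤ w b)
    {P : β → Prop} {Q : κ → β → Prop} {_ : DecidablePred P} {_ : ∀ a, DecidablePred (Q a)}
    (t : Finset κ) (hPQ : ∀ b, P b → ∃ a ∈ t, Q a b) :
    ∑ b with P b, w b ≤ ∑ a ∈ t, ∑ b with Q a b, w b := by
  simp_rw [sum_filter]
  rw [sum_comm]
  refine sum_le_sum fun b _ => ?_
  split_ifs with hb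
  · obtain ⟨a, ha, hQ⟩ := hPQ b hb
    calc w b = if Q a b then w b else 0 := (if_pos hQ).symm
      _ ≤ ∑ a ∈ t, if Q a b then w b else 0 :=
        single_le_sum (f := fun a => if Q a b then w b else 0)
          (fun a _ => ite_nonneg (hw b) le_rfl) ha
  · exact sum_nonneg fun a _ => ite_nonneg (hw b) le_rfl

theorem sum_sum_filter_le_of_pairwiseDisjoint {X ι α : Type*} [Fintype X] {pt : X → α}
    {y : X → ℝ} (hy : ∀ x, 0 ≤ y x) {S : ι → Set α} {_ : ∀ i, DecidablePred (pt · ∈ S i)}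
    {T : Finset ι} (hT : (T : Set ι).PairwiseDisjoint S) :
    ∑ i ∈ T, ∑ x with pt x ∈ S i, y x ≤ ∑ x, y x := by
  have hdisj : (T : Set ι).PairwiseDisjoint fun i => ({x | pt x ∈ S i} : Finset X) :=
    fun i hi j hj hij => disjoint_filter.2 fun x _ hxi hxj =>
      Set.disjoint_left.1 (hT hi hj hij) hxi hxj
  rw [← sum_biUnion hdisj]
  exact sum_le_sum_of_subset_of_nonneg (subset_univ _) fun x _ _ => hy x

def HasPivots {ι α : Type*} (F : ι → Set α) (L : ι → Finset α) : Prop :=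
  ∀ s : Finset ι, s.Nonempty → (⋂ i ∈ s, F i).Nonempty → ∃ i ∈ s, ∃ e ∈ L i, ∀ j ∈ s, e ∈ F j

theorem hasPivots_of_forall_exists_Icc_subset {ι α : Type*} [LinearOrder α] {F : ι → Set α}
    {L : ι → Finset α} (hL : ∀ i, ∀ x ∈ F i, ∃ l ∈ L i, l ≤ x ∧ Set.Icc l x ⊆ F i) :
    HasPivots F L := by
  rintro s ⟨i₀, hi₀⟩ ⟨x, hx⟩
  rw [Set.mem_iInter₂] at hx
  set P := {l ∈ s.biUnion L | l ≤ x}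
  have hP : P.Nonempty := by
    obtain ⟨l, hl, hlx, -⟩ := hL i₀ x (hx i₀ hi₀)
    exact ⟨l, mem_filter.2 ⟨mem_biUnion.2 ⟨i₀, hi₀, hl⟩, hlx⟩⟩
  obtain ⟨he, hex⟩ := mem_filter.1 (P.max'_mem hP)
  obtain ⟨i, hi, he⟩ := mem_biUnion.1 he
  refine ⟨i, hi, P.max' hP, he, fun j hj => ?_⟩
  obtain ⟨l, hl, hlx, hlF⟩ := hL j x (hx j hj)
  exact hlF ⟨P.le_max' l (mem_filter.2 ⟨mem_biUnion.2 ⟨j, hj, hl⟩, hlx⟩), hex⟩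

theorem exists_pivot_of_injective {ι α : Type*} {F : ι → Set α} {L : ι → Finset α}
    {p q : ℕ} (hq : 0 < q)
    (hpq : ∀ P : Finset ι, #P = p → ∃ Q ⊆ P, #Q = q ∧ (⋂ i ∈ Q, F i).Nonempty)
    (hpiv : HasPivots F L) {f : Fin p → ι} (hf : Function.Injective f) :
    ∃ J ∈ powersetCard q univ, ∃ j₀ ∈ J, ∃ e ∈ L (f j₀), ∀ j ∈ J.erase j₀, e ∈ F (f j) := by
  obtain ⟨Q, hQf, hQq, hQ⟩ :=
    hpq (univ.image f) (by rw [card_image_of_injective _ hf, card_univ, Fintype.card_fin])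
  obtain ⟨J, -, rfl⟩ := subset_image_iff.1 hQf
  obtain ⟨_, hi₀, e, he, hmem⟩ := hpiv (J.image f) (card_pos.1 (hQq ▸ hq)) hQ
  obtain ⟨j₀, hj₀, rfl⟩ := mem_image.1 hi₀
  refine ⟨J, mem_powersetCard.2 ⟨subset_univ _, ?_⟩, j₀, hj₀, e, he, fun j hj => ?_⟩
  · rwa [card_image_of_injective _ hf] at hQq
  · exact hmem _ (mem_image_of_mem f (mem_of_mem_erase hj))

section TupleWeights

variable {ι α : Type*} [Fintype ι] {z : ι → ℝ} {p : ℕ}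

theorem sum_prod_filter_le (hz : ∀ i, 0 ≤ z i) {S : Finset (Fin p)} {j₀ : Fin p} (hj₀ : j₀ ∈ S)
    (i : ι) {A : Finset ι} (hA : ∑ a ∈ A, z a ≤ 1) :
    ∑ f : Fin p → ι with f j₀ = i ∧ ∀ j ∈ S.erase j₀, f j ∈ A, ∏ j, z (f j)
      ≤ z i * (∑ a, z a) ^ (p - #S) := by
  set B : Fin p → Finset ι := fun j => if j = j₀ then {i} else if j ∈ S then A else univ
  have hsub : ({f | f j₀ = i ∧ ∀ j ∈ S.erase j₀, f j ∈ A} : Finset (Fin p → ι)) ⊆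
      Fintype.piFinset B := by
    intro f hf
    rw [mem_filter] at hf
    refine Fintype.mem_piFinset.2 fun j => ?_
    by_cases hj : j = j₀
    · simp [B, hj, hf.2.1]
    by_cases hjS : j ∈ S
    · simpa [B, hj, hjS] using hf.2.2 j (mem_erase.2 ⟨hj, hjS⟩)
    · simp [B, hj, hjS]
  have hS : ∏ j ∈ S, ∑ a ∈ B j, z a ≤ z i := by
    rw [← mul_prod_erase S _ hj₀, show ∑ a ∈ B j₀, z a = z i by simp [B]]
    refine mul_le_of_le_one_right (hz i)
      (prod_le_one (fun j _ => sum_nonneg fun a _ => hz a) fun j hj => ?_)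
    simpa [B, ne_of_mem_erase hj, mem_of_mem_erase hj] using hA
  have hSc : ∏ j ∈ Sᶜ, ∑ a ∈ B j, z a = (∑ a, z a) ^ (p - #S) := by
    rw [prod_congr (g := fun _ => ∑ a, z a) rfl fun j hj => by
        simp [B, (ne_of_mem_of_not_mem hj₀ (mem_compl.1 hj)).symm, mem_compl.1 hj],
      prod_const, card_compl, Fintype.card_fin]
  calc _ ≤ ∑ f ∈ Fintype.piFinset B, ∏ j, z (f j) :=
        sum_le_sum_of_subset_of_nonneg hsub fun f _ _ => prod_nonneg fun j _ => hz _
    _ = ∏ j, ∑ a ∈ B j, z a := (prod_univ_sum B fun _ => z).symm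
    _ = (∏ j ∈ S, ∑ a ∈ B j, z a) * ∏ j ∈ Sᶜ, ∑ a ∈ B j, z a := (prod_mul_prod_compl S _).symm
    _ ≤ z i * (∑ a, z a) ^ (p - #S) := by
      rw [hSc]
      exact mul_le_mul_of_nonneg_right hS (pow_nonneg (sum_nonneg fun a _ => hz a) _)

theorem sum_prod_filter_apply_eq_apply_le (hz : ∀ i, 0 ≤ z i) (hz₁ : ∀ i, z i ≤ 1)
    {j₀ j₁ : Fin p} (hj : j₀ ≠ j₁) :
    ∑ f : Fin p → ι with f j₀ = f j₁, ∏ j, z (f j) ≤ (∑ a, z a) ^ (p - 1) := by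
  have hp : 2 ≤ p := by
    simpa [hj] using card_le_univ ({j₀, j₁} : Finset (Fin p))
  calc _ ≤ ∑ i, ∑ f : Fin p → ι with
          f j₀ = i ∧ ∀ j ∈ ({j₀, j₁} : Finset (Fin p)).erase j₀, f j ∈ ({i} : Finset ι),
          ∏ j, z (f j) :=
        sum_filter_le_sum_sum_filter (fun f => prod_nonneg fun j _ => hz _) univ
          fun f hf => ⟨f j₀, mem_univ _, rfl, by simp +contextual [hf]⟩
    _ ≤ ∑ i, z i * (∑ a, z a) ^ (p - 2) := by
        refine sum_le_sum fun i _ => ?_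
        simpa [hj] using sum_prod_filter_le hz (mem_insert_self j₀ {j₁}) i (A := {i})
          (by simpa using hz₁ i)
    _ = (∑ a, z a) ^ (p - 1) := by
        rw [← sum_mul, ← pow_succ']
        congr 1
        omega

theorem sum_prod_filter_not_injective_le (hz : ∀ i, 0 ≤ z i) (hz₁ : ∀ i, z i ≤ 1) :
    ∑ f : Fin p → ι with ¬ Function.Injective f, ∏ j, z (f j)
      ≤ p ^ 2 * (∑ a, z a) ^ (p - 1) := by
  calc _ ≤ ∑ jj ∈ (univ : Finset (Fin p)).offDiag,
          ∑ f : Fin p → ι with f jj.1 = f jj.2, ∏ j, z (f j) :=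
        sum_filter_le_sum_sum_filter (fun f => prod_nonneg fun j _ => hz _) _ fun f hf => by
          obtain ⟨j₀, j₁, heq, hne⟩ := Function.not_injective_iff.1 hf
          exact ⟨(j₀, j₁), by simpa using hne, heq⟩
    _ ≤ ∑ jj ∈ (univ : Finset (Fin p)).offDiag, (∑ a, z a) ^ (p - 1) :=
        sum_le_sum fun jj hjj => sum_prod_filter_apply_eq_apply_le hz hz₁ (mem_offDiag.1 hjj).2.2
    _ ≤ p ^ 2 * (∑ a, z a) ^ (p - 1) := by
        rw [sum_const, nsmul_eq_mul]
        refine mul_le_mul_of_nonneg_right ?_ (pow_nonneg (sum_nonneg fun a _ => hz a) _)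
        rw [offDiag_card, card_univ, Fintype.card_fin]
        exact_mod_cast (Nat.sub_le _ _).trans_eq (sq p).symm

variable {F : ι → Set α} {L : ι → Finset α} {d : ℕ}

theorem sum_prod_filter_exists_mem_forall_le (hz : ∀ i, 0 ≤ z i) (hL : ∀ i, #(L i) ≤ d)
    (hload : ∀ i, ∀ e ∈ L i, ∑ i' with e ∈ F i', z i' ≤ 1) {J : Finset (Fin p)} {j₀ : Fin p}
    (hj₀ : j₀ ∈ J) :
    ∑ f : Fin p → ι with ∃ e ∈ L (f j₀), ∀ j ∈ J.erase j₀, e ∈ F (f j), ∏ j, z (f j)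
      ≤ d * (∑ a, z a) ^ (p - #J + 1) := by
  have hW : ∀ f : Fin p → ι, 0 ≤ ∏ j, z (f j) := fun f => prod_nonneg fun j _ => hz _
  calc _ ≤ ∑ i, ∑ f : Fin p → ι with ∃ e ∈ L i,
          f j₀ = i ∧ ∀ j ∈ J.erase j₀, f j ∈ ({i' | e ∈ F i'} : Finset ι), ∏ j, z (f j) :=
        sum_filter_le_sum_sum_filter hW univ fun f ⟨e, he, hmem⟩ =>
          ⟨f j₀, mem_univ _, e, he, rfl, by simpa using hmem⟩
    _ ≤ ∑ i, ∑ e ∈ L i, ∑ f : Fin p → ι with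
          f j₀ = i ∧ ∀ j ∈ J.erase j₀, f j ∈ ({i' | e ∈ F i'} : Finset ι), ∏ j, z (f j) :=
        sum_le_sum fun i _ => sum_filter_le_sum_sum_filter hW _ fun f hf => hf
    _ ≤ ∑ i, ∑ _e ∈ L i, z i * (∑ a, z a) ^ (p - #J) :=
        sum_le_sum fun i _ => sum_le_sum fun e he =>
          sum_prod_filter_le hz hj₀ i (hload i e he)
    _ ≤ ∑ i, d * (z i * (∑ a, z a) ^ (p - #J)) := by
        refine sum_le_sum fun i _ => ?_
        rw [sum_const, nsmul_eq_mul]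
        exact mul_le_mul_of_nonneg_right (by exact_mod_cast hL i)
          (mul_nonneg (hz i) (pow_nonneg (sum_nonneg fun a _ => hz a) _))
    _ = d * (∑ a, z a) ^ (p - #J + 1) := by
        rw [← mul_sum, ← sum_mul, pow_succ]
        ring

theorem sum_prod_filter_pivot_le (hz : ∀ i, 0 ≤ z i) (hL : ∀ i, #(L i) ≤ d)
    (hload : ∀ i, ∀ e ∈ L i, ∑ i' with e ∈ F i', z i' ≤ 1) (q : ℕ) :
    ∑ f : Fin p → ι with ∃ J ∈ powersetCard q univ, ∃ j₀ ∈ J, ∃ e ∈ L (f j₀),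
        ∀ j ∈ J.erase j₀, e ∈ F (f j), ∏ j, z (f j)
      ≤ p.choose q * q * d * (∑ a, z a) ^ (p - q + 1) := by
  have hW : ∀ f : Fin p → ι, 0 ≤ ∏ j, z (f j) := fun f => prod_nonneg fun j _ => hz _
  calc _ ≤ ∑ J ∈ powersetCard q univ, ∑ f : Fin p → ι with ∃ j₀ ∈ J, ∃ e ∈ L (f j₀),
          ∀ j ∈ J.erase j₀, e ∈ F (f j), ∏ j, z (f j) :=
        sum_filter_le_sum_sum_filter hW _ fun f hf => hf
    _ ≤ ∑ J ∈ powersetCard q univ, ∑ j₀ ∈ J, ∑ f : Fin p → ι with ∃ e ∈ L (f j₀),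
          ∀ j ∈ J.erase j₀, e ∈ F (f j), ∏ j, z (f j) :=
        sum_le_sum fun J _ => sum_filter_le_sum_sum_filter hW _ fun f hf => hf
    _ ≤ ∑ J ∈ powersetCard q univ, ∑ _j₀ ∈ J, d * (∑ a, z a) ^ (p - q + 1) := by
        refine sum_le_sum fun J hJ => sum_le_sum fun j₀ hj₀ => ?_
        rw [← (mem_powersetCard.1 hJ).2]
        exact sum_prod_filter_exists_mem_forall_le hz hL hload hj₀
    _ = p.choose q * q * d * (∑ a, z a) ^ (p - q + 1) := by
        rw [sum_congr rfl fun J hJ => by rw [sum_const, (mem_powersetCard.1 hJ).2], sum_const,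
          card_powersetCard, card_univ, Fintype.card_fin]
        simp only [nsmul_eq_mul]
        ring

theorem pow_sum_le_of_pq {q : ℕ} (hq : 0 < q)
    (hpq : ∀ P : Finset ι, #P = p → ∃ Q ⊆ P, #Q = q ∧ (⋂ i ∈ Q, F i).Nonempty)
    (hpiv : HasPivots F L) (hL : ∀ i, #(L i) ≤ d) (hz : ∀ i, 0 ≤ z i) (hz₁ : ∀ i, z i ≤ 1)
    (hload : ∀ i, ∀ e ∈ L i, ∑ i' with e ∈ F i', z i' ≤ 1) :
    (∑ a, z a) ^ p
      ≤ p ^ 2 * (∑ a, z a) ^ (p - 1) + p.choose q * q * d * (∑ a, z a) ^ (p - q + 1) := by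
  rw [Fintype.sum_pow, ← sum_filter_not_add_sum_filter univ Function.Injective]
  refine add_le_add (sum_prod_filter_not_injective_le hz hz₁)
    ((sum_le_sum_of_subset_of_nonneg ?_ fun f _ _ => prod_nonneg fun j _ => hz _).trans
      (sum_prod_filter_pivot_le hz hL hload q))
  intro f hf
  simp only [mem_filter, mem_univ, true_and] at hf ⊢
  exact exists_pivot_of_injective hq hpq hpiv hf

end TupleWeights

noncomputable def fractionalPiercingBound (d p q : ℕ) : ℝ :=
  max (2 * (Real.exp 1 * p) ^ ((q : ℝ) / (q - 1)) * (d : ℝ) ^ (1 / ((q : ℝ) - 1)) / q) (2 * p ^ 2)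

theorem Nat.choose_mul_pow_le_exp_one_mul_pow (p q : ℕ) :
    (p.choose q : ℝ) * q ^ q ≤ (Real.exp 1 * p) ^ q := by
  have hq : (q : ℝ) ^ q ≤ Real.exp 1 ^ q * q ! := by
    rw [Real.exp_one_pow, ← div_le_iff₀ (by positivity)]
    exact Real.pow_div_factorial_le_exp _ (Nat.cast_nonneg q) q
  calc (p.choose q : ℝ) * q ^ q ≤ (p ^ q / q !) * (Real.exp 1 ^ q * q !) :=
        mul_le_mul (Nat.choose_le_pow_div q p) hq (by positivity) (by positivity)
    _ = (Real.exp 1 * p) ^ q := by field_simp; ring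

theorem two_mul_choose_mul_lt_pow {p q d : ℕ} {m : ℝ} (hq : 2 ≤ q)
    (hm : 2 * (Real.exp 1 * p) ^ ((q : ℝ) / (q - 1)) * (d : ℝ) ^ (1 / ((q : ℝ) - 1)) / q < m) :
    2 * p.choose q * q * d < m ^ (q - 1) := by
  set A := 2 * (Real.exp 1 * p) ^ ((q : ℝ) / (q - 1)) * (d : ℝ) ^ (1 / ((q : ℝ) - 1)) / q
  have hq₁ : ((q - 1 : ℕ) : ℝ) = q - 1 := by rw [Nat.cast_sub (by omega), Nat.cast_one]
  have hq₁' : (q : ℝ) - 1 ≠ 0 := by rw [← hq₁]; exact_mod_cast (by omega : q - 1 ≠ 0)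
  have hA : A ^ (q - 1) = 2 ^ (q - 1) * (Real.exp 1 * p) ^ q * d / q ^ (q - 1) := by
    rw [div_pow, mul_pow, mul_pow, ← Real.rpow_mul_natCast (by positivity),
      ← Real.rpow_mul_natCast (by positivity), hq₁, div_mul_cancel₀ _ hq₁',
      one_div_mul_cancel hq₁', Real.rpow_natCast, Real.rpow_one]
  have h2 : (2 : ℝ) ≤ 2 ^ (q - 1) := le_self_pow₀ one_le_two (by omega)
  have hle : 2 * p.choose q * q * d ≤ A ^ (q - 1) := by
    rw [hA, le_div_iff₀ (by positivity)]
    calc 2 * p.choose q * q * d * (q : ℝ) ^ (q - 1) = 2 * ((p.choose q : ℝ) * q ^ q) * d := by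
          rw [show (q : ℝ) ^ q = q * q ^ (q - 1) by rw [← pow_succ', Nat.sub_add_cancel (by omega)]]
          ring
      _ ≤ 2 ^ (q - 1) * (Real.exp 1 * p) ^ q * d := by
          gcongr
          exact Nat.choose_mul_pow_le_exp_one_mul_pow p q
  exact hle.trans_lt (pow_lt_pow_left₀ hm (by positivity) (by omega))

theorem le_fractionalPiercingBound_of_pow_le {p q d : ℕ} {m : ℝ} (hq : 2 ≤ q) (hqp : q ≤ p)
    (h : m ^ p ≤ p ^ 2 * m ^ (p - 1) + p.choose q * q * d * m ^ (p - q + 1)) :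
    m ≤ fractionalPiercingBound d p q := by
  by_contra! hlt
  rw [fractionalPiercingBound, max_lt_iff] at hlt
  obtain ⟨hA, hp⟩ := hlt
  have hm : 0 < m := lt_of_le_of_lt (by positivity) hp
  have h₁ : p ^ 2 * m ^ (p - 1) < m ^ p / 2 := by
    rw [show m ^ p = m * m ^ (p - 1) by rw [← pow_succ', Nat.sub_add_cancel (by omega)]]
    nlinarith [pow_pos hm (p - 1)]
  have h₂ : p.choose q * q * d * m ^ (p - q + 1) < m ^ p / 2 := by
    have := mul_lt_mul_of_pos_right (two_mul_choose_mul_lt_pow hq hA) (pow_pos hm (p - q + 1))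
    rw [← pow_add, show q - 1 + (p - q + 1) = p by omega] at this
    linarith
  linarith

theorem natCast_mul_fractionalPiercingBound_le {d p q : ℕ} (hq : 2 ≤ q) :
    d * fractionalPiercingBound d p q ≤
      max (2 * (Real.exp 1 * p) ^ ((q : ℝ) / (q - 1)) / q * (d : ℝ) ^ ((q : ℝ) / (q - 1)) + d)
        (2 * p ^ 2 * d) := by
  have hq₁ : (0 : ℝ) < q - 1 := sub_pos.2 (by exact_mod_cast hq)
  have hd : (d : ℝ) * (d : ℝ) ^ (1 / ((q : ℝ) - 1)) = (d : ℝ) ^ ((q : ℝ) / (q - 1)) := by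
    rw [show (q : ℝ) / (q - 1) = 1 + 1 / (q - 1) by field_simp [hq₁.ne']; ring,
      Real.rpow_add' (Nat.cast_nonneg d) (add_pos one_pos (one_div_pos.2 hq₁)).ne',
      Real.rpow_one]
  rw [fractionalPiercingBound, mul_max_of_nonneg _ _ (Nat.cast_nonneg d)]
  refine max_le_max (le_add_of_le_of_nonneg (le_of_eq ?_) (Nat.cast_nonneg d)) (by rw [mul_comm])
  rw [← hd]
  ring

theorem sum_le_fractionalPiercingBound {ι α : Type*} [Fintype ι] {F : ι → Set α} {L : ι → Finset α}
    {d p q : ℕ} {z : ι → ℝ} (hq : 2 ≤ q) (hqp : q ≤ p) (hF : ∀ i, (F i).Nonempty)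
    (hpq : ∀ P : Finset ι, #P = p → ∃ Q ⊆ P, #Q = q ∧ (⋂ i ∈ Q, F i).Nonempty)
    (hpiv : HasPivots F L) (hL : ∀ i, #(L i) ≤ d) (hz : ∀ i, 0 ≤ z i)
    (hload : ∀ i, ∀ e ∈ L i, ∑ i' with e ∈ F i', z i' ≤ 1) :
    ∑ i, z i ≤ fractionalPiercingBound d p q := by
  have hz₁ : ∀ i, z i ≤ 1 := fun i => by
    obtain ⟨_, hi, e, he, hmem⟩ := hpiv {i} (singleton_nonempty i) (by simpa using hF i)
    obtain rfl := mem_singleton.1 hi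
    calc z _ ≤ ∑ i' with e ∈ F i', z i' :=
          single_le_sum (fun i' _ => hz i') (by simpa using hmem _ (mem_singleton_self _))
      _ ≤ 1 := hload _ e he
  exact le_fractionalPiercingBound_of_pow_le hq hqp
    (pow_sum_le_of_pq (by omega) hpq hpiv hL hz hz₁ hload)

theorem exists_pairwiseDisjoint_forall_exists_right_mem {ι : Type*} (a b : ι → ℝ)
    (hab : ∀ i, a i ≤ b i) (s : Finset ι) :
    ∃ T ⊆ s, (T : Set ι).PairwiseDisjoint (fun i => Set.Icc (a i) (b i)) ∧
      ∀ i ∈ s, ∃ j ∈ T, b j ∈ Set.Icc (a i) (b i) := by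
  induction s using Finset.strongInduction with
  | H s ih =>
  rcases s.eq_empty_or_nonempty with rfl | hs
  · exact ⟨∅, empty_subset _, by simp, by simp⟩
  obtain ⟨i₀, hi₀, hmin⟩ := s.exists_min_image b hs
  obtain ⟨T, hTs, hTdisj, hT⟩ :=
    ih {i ∈ s | b i₀ < a i} (filter_ssubset.2 ⟨i₀, hi₀, (hab i₀).not_gt⟩)
  refine ⟨insert i₀ T, insert_subset hi₀ (hTs.trans (filter_subset _ _)), ?_, fun i hi => ?_⟩
  · rw [coe_insert]
    refine hTdisj.insert fun j hj _ => Set.disjoint_left.2 fun x hx hx' => ?_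
    exact ((mem_filter.1 (hTs hj)).2.trans_le hx'.1).not_ge hx.2
  · by_cases h : b i₀ < a i
    · obtain ⟨j, hj, hbj⟩ := hT i (mem_filter.2 ⟨hi, h⟩)
      exact ⟨j, mem_insert_of_mem hj, hbj⟩
    · exact ⟨i₀, mem_insert_self _ _, not_lt.1 h, hmin i hi⟩

theorem IsDInterval.exists_finset_Icc_subset {d : ℕ} {S : Set ℝ} (hS : IsDInterval d S) :
    ∃ L : Finset ℝ, #L ≤ d ∧ ∀ x ∈ S, ∃ l ∈ L, l ≤ x ∧ Set.Icc l x ⊆ S := by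
  obtain ⟨-, k, a, b, hk, -, -, rfl⟩ := hS
  refine ⟨univ.image a, card_image_le.trans (by simpa using hk), fun x hx => ?_⟩
  obtain ⟨j, hj⟩ := Set.mem_iUnion.1 hx
  exact ⟨a j, mem_image_of_mem a (mem_univ j), hj.1,
    fun y hy => Set.mem_iUnion.2 ⟨j, hy.1, hy.2.trans hj.2⟩⟩

theorem IsDInterval.exists_Icc_subset_one_le_mul_sum {X : Type*} [Fintype X] {d : ℕ}
    {S : Set ℝ} (hS : IsDInterval d S) (pt : X → ℝ) {y : X → ℝ} (hy : ∀ x, 0 ≤ y x)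
    (h : 1 ≤ ∑ x with pt x ∈ S, y x) :
    ∃ a b, a ≤ b ∧ Set.Icc a b ⊆ S ∧ 1 ≤ d * ∑ x with pt x ∈ Set.Icc a b, y x := by
  obtain ⟨-, k, a, b, hk, hab, -, rfl⟩ := hS
  have hcomp : 1 ≤ ∑ j, ∑ x with pt x ∈ Set.Icc (a j) (b j), y x :=
    h.trans (sum_filter_le_sum_sum_filter hy univ fun x hx => by simpa using Set.mem_iUnion.1 hx)
  have hk₀ : (univ : Finset (Fin k)).Nonempty :=
    nonempty_of_sum_ne_zero (by linarith : ∑ j, ∑ x with pt x ∈ Set.Icc (a j) (b j), y x ≠ 0)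
  obtain ⟨j, -, hj⟩ := exists_le_of_sum_le hk₀
    (f := fun _ => (1 : ℝ)) (g := fun j => d * ∑ x with pt x ∈ Set.Icc (a j) (b j), y x) <| by
      rw [← mul_sum, sum_const, card_univ, Fintype.card_fin, nsmul_one]
      exact (Nat.cast_le.2 hk).trans (le_mul_of_one_le_right (Nat.cast_nonneg d) hcomp)
  exact ⟨a j, b j, hab j, Set.subset_iUnion (fun j => Set.Icc (a j) (b j)) j, hj⟩

theorem exists_piercing_card_le_of_fractional_cover {X ι : Type*} [Fintype X] [Fintype ι]
    {d : ℕ} {F : ι → Set ℝ} (hF : ∀ i, IsDInterval d (F i)) (pt : X → ℝ) {y : X → ℝ}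
    (hy : ∀ x, 0 ≤ y x) (hcover : ∀ i, 1 ≤ ∑ x with pt x ∈ F i, y x) :
    ∃ C : Finset ℝ, (#C : ℝ) ≤ d * ∑ x, y x ∧ ∀ i, ∃ c ∈ C, c ∈ F i := by
  choose a b hab hsub hheavy using
    fun i => (hF i).exists_Icc_subset_one_le_mul_sum pt hy (hcover i)
  obtain ⟨T, -, hTdisj, hpierce⟩ := exists_pairwiseDisjoint_forall_exists_right_mem a b hab univ
  refine ⟨T.image b, ?_, fun i => ?_⟩
  · calc (#(T.image b) : ℝ) ≤ ∑ _i ∈ T, 1 := by simpa using card_image_le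
      _ ≤ ∑ i ∈ T, d * ∑ x with pt x ∈ Set.Icc (a i) (b i), y x := by
          gcongr with i
          exact hheavy i
      _ ≤ d * ∑ x, y x := by
          rw [← mul_sum]
          gcongr
          exact sum_sum_filter_le_of_pairwiseDisjoint hy hTdisj
  · obtain ⟨j, hj, hbj⟩ := hpierce i (mem_univ i)
    exact ⟨b j, mem_image_of_mem b hj, hsub i hbj⟩

open Matrix in
theorem Matrix.exists_mulVec_le_le_vecMul {X ι : Type*} [Fintype X] [Fintype ι] [Nonempty X]
    [Nonempty ι] (G : Matrix X ι ℝ) :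
    ∃ y ∈ stdSimplex ℝ X, ∃ z ∈ stdSimplex ℝ ι, ∃ v : ℝ,
      (∀ x, (G *ᵥ z) x ≤ v) ∧ ∀ i, v ≤ (y ᵥ* G) i := by
  let B : (X → ℝ) →ₗ[ℝ] (ι → ℝ) →ₗ[ℝ] ℝ := Matrix.toLinearMap₂' ℝ G
  obtain ⟨z, hz, y, hy, hsaddle⟩ := Sion.exists_isSaddlePointOn (f := fun z y => B y z)
    ⟨_, single_mem_stdSimplex ℝ (Classical.arbitrary ι)⟩ (convex_stdSimplex ℝ ι)
    (isCompact_stdSimplex ℝ ι)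
    (fun y _ => (B y).continuous_of_finiteDimensional.lowerSemicontinuous.lowerSemicontinuousOn _)
    (fun y _ => ((B y).convexOn (convex_stdSimplex ℝ ι)).quasiconvexOn)
    (convex_stdSimplex ℝ X) ⟨_, single_mem_stdSimplex ℝ (Classical.arbitrary X)⟩
    (isCompact_stdSimplex ℝ X)
    (fun z _ =>
      (B.flip z).continuous_of_finiteDimensional.upperSemicontinuous.upperSemicontinuousOn _)
    (fun z _ => ((B.flip z).concaveOn (convex_stdSimplex ℝ X)).quasiconcaveOn)
  refine ⟨y, hy, z, hz, y ⬝ᵥ G *ᵥ z, fun x => ?_, fun i => ?_⟩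
  · simpa [B, Matrix.toLinearMap₂'_apply'] using hsaddle z hz _ (single_mem_stdSimplex ℝ x)
  · have h := hsaddle _ (single_mem_stdSimplex ℝ i) y hy
    simp only [B, Matrix.toLinearMap₂'_apply', Matrix.mulVec_single_one] at h
    exact h.trans_eq rfl

theorem exists_fractional_cover_matching_sum_eq {X ι : Type*} [Fintype X] [Fintype ι]
    (R : X → ι → Prop) (hR : ∀ i, ∃ x, R x i) :
    ∃ (y : X → ℝ) (z : ι → ℝ), (∀ x, 0 ≤ y x) ∧ (∀ i, 0 ≤ z i) ∧ ∑ x, y x = ∑ i, z i ∧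
      (∀ x, ∑ i with R x i, z i ≤ 1) ∧ ∀ i, 1 ≤ ∑ x with R x i, y x := by
  rcases isEmpty_or_nonempty ι with hι | hι
  · exact ⟨0, 0, fun _ => le_rfl, fun _ => le_rfl, by simp, fun _ => by simp, isEmptyElim⟩
  have : Nonempty X := (hR (Classical.arbitrary ι)).nonempty
  obtain ⟨y, hy, z, hz, v, hrow, hcol⟩ :=
    (Matrix.of fun x i => if R x i then (1 : ℝ) else 0).exists_mulVec_le_le_vecMul
  replace hrow : ∀ x, ∑ i with R x i, z i ≤ v := by
    simpa [Matrix.mulVec, dotProduct, sum_filter] using hrow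
  replace hcol : ∀ i, v ≤ ∑ x with R x i, y x := by
    simpa [Matrix.vecMul, dotProduct, sum_filter] using hcol
  have hv : 0 < v := by
    obtain ⟨i, -, hi⟩ := exists_lt_of_sum_lt (s := univ) (f := 0) (g := z) (by simp [hz.2])
    obtain ⟨x, hx⟩ := hR i
    exact hi.trans_le <| (single_le_sum (fun i _ => hz.1 i) (by simpa using hx)).trans (hrow x)
  refine ⟨fun x => y x / v, fun i => z i / v, fun x => div_nonneg (hy.1 x) hv.le,
    fun i => div_nonneg (hz.1 i) hv.le, by rw [← sum_div, ← sum_div, hy.2, hz.2],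
    fun x => ?_, fun i => ?_⟩
  · rw [← sum_div, div_le_one hv]
    exact hrow x
  · rw [← sum_div, le_div_iff₀ hv, one_mul]
    exact hcol i

theorem zerbib_pq_general {d p q : ℕ} (hq : 2 ≤ q) (hqp : q ≤ p)
    {ι : Type*} [Fintype ι]
    (F : ι → Set ℝ) (hF : ∀ i, IsDInterval d (F i))
    (hpq : ∀ P : Finset ι, P.card = p →
      ∃ Q ⊆ P, Q.card = q ∧ (⋂ i ∈ Q, F i).Nonempty) :
    ∃ C : Finset ℝ,
      (C.card : ℝ) ≤ max
        (2 * (Real.exp 1 * (p : ℝ)) ^ ((q : ℝ) / ((q : ℝ) - 1)) / (q : ℝ) *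
          (d : ℝ) ^ ((q : ℝ) / ((q : ℝ) - 1)) + (d : ℝ))
        (2 * (p : ℝ) ^ 2 * (d : ℝ)) ∧
      ∀ i, ∃ x ∈ C, x ∈ F i := by
  choose L hLcard hLF using fun i => (hF i).exists_finset_Icc_subset
  have hpiv : HasPivots F L := hasPivots_of_forall_exists_Icc_subset hLF
  have hFne : ∀ i, (F i).Nonempty := fun i => (hF i).1
  have hL : ∀ i, ∀ e ∈ L i, e ∈ univ.biUnion L := fun i e he => mem_biUnion.2 ⟨i, mem_univ i, he⟩
  obtain ⟨y, z, hy, hz, hyz, hload, hcover⟩ :=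
    exists_fractional_cover_matching_sum_eq (X := univ.biUnion L) (fun x i => (x : ℝ) ∈ F i)
      fun i => by
        obtain ⟨x, hx⟩ := hFne i
        obtain ⟨l, hl, hlx, hlF⟩ := hLF i x hx
        exact ⟨⟨l, hL i l hl⟩, hlF ⟨le_rfl, hlx⟩⟩
  have hzM := sum_le_fractionalPiercingBound hq hqp hFne hpq hpiv hLcard hz
    fun i e he => hload ⟨e, hL i e he⟩
  obtain ⟨C, hC, hCF⟩ := exists_piercing_card_le_of_fractional_cover hF Subtype.val hy hcover
  refine ⟨C, hC.trans ?_, hCF⟩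
  rw [hyz]
  exact (mul_le_mul_of_nonneg_left hzM (Nat.cast_nonneg d)).trans
    (natCast_mul_fractionalPiercingBound_le hq)

/-- Zerbib: a finite family of `d`-intervals with the `(p,q)`-property can be pierced
by at most `max{(2(ep)^(q/(q-1))/q) d^(q/(q-1)) + d, 2p²d}` points. -/
theorem zerbib_pq {d p q : ℕ} (hd : 1 ≤ d) (hq : 2 ≤ q) (hqp : q ≤ p)
    {ι : Type*} [Fintype ι]
    (F : ι → Set ℝ) (hF : ∀ i, IsDInterval d (F i))
    (hpq : ∀ P : Finset ι, P.card = p →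
      ∃ Q ⊆ P, Q.card = q ∧ (⋂ i ∈ Q, F i).Nonempty) :
    ∃ C : Finset ℝ,
      (C.card : ℝ) ≤ max
        (2 * (Real.exp 1 * (p : ℝ)) ^ ((q : ℝ) / ((q : ℝ) - 1)) / (q : ℝ) *
          (d : ℝ) ^ ((q : ℝ) / ((q : ℝ) - 1)) + (d : ℝ))
        (2 * (p : ℝ) ^ 2 * (d : ℝ)) ∧
      ∀ i, ∃ x ∈ C, x ∈ F i :=
  zerbib_pq_general hq hqp F hF hpq
end

section
/- Let d ≥ 1 and let F be a finite family of convex sets in ℝ^d such that every subfamily of F with at most 2^d members has a common point belonging to the integer lattice ℤ^d. Then all the sets of F have a common point belonging to ℤ^d. -/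
/-!
Induct on the size of the subfamily; for more than `2^d` sets the induction hypothesis gives, for
each index `l`, a lattice point `x l` in every set except possibly `C l`. Now descend on the number
of lattice points in the convex hull `K` of the `x l`. Unless some `x l` lies in `C l`, two of the
`x l`, say `x i` and `x k`, agree modulo 2, so their midpoint `y` is a lattice point, lying in
every `C j` with `j ≠ i, k`. Replacing `x k` by `y` and `C i` by `K ∩ conv (C i ∪ {y})` gives a
smaller instance, whose common lattice point `z` lies in `C j` for `j ≠ i`. Replacing `x i` by `z`
in the original instance gives a smaller instance again, which yields the common point. Both
instances are smaller because `p ∉ conv (s ∪ {midpoint a p})` for convex `s ∋ a` with `p ∉ s`.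
-/

open Set Function

theorem notMem_convexHull_insert_midpoint {E : Type*} [AddCommGroup E] [Module ℝ E]
    {s : Set E} (hs : Convex ℝ s) {a p : E} (ha : a ∈ s) (hp : p ∉ s) :
    p ∉ convexHull ℝ (insert (midpoint ℝ a p) s) := by
  rw [convexHull_insert ⟨a, ha⟩, hs.convexHull_eq, mem_convexJoin]
  rintro ⟨_, rfl, w, hw, hpw⟩
  have hmp : midpoint ℝ a p ≠ p := fun h => hp ((midpoint_eq_right_iff ℝ).1 h ▸ ha)
  exact hp (hs.segment_subset ha hw
    ((wbtw_midpoint ℝ a p).trans_expand_right (mem_segment_iff_wbtw.1 hpw) hmp).mem_segment)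

theorem range_update_subset_insert {α β : Type*} [DecidableEq α] {x : α → β} {l : α} {s : Set β}
    (hx : ∀ l' ≠ l, x l' ∈ s) (p : β) : range (update x l p) ⊆ insert p s := by
  rintro _ ⟨l', rfl⟩
  rcases eq_or_ne l' l with rfl | hl'
  · simp
  · simpa [hl'] using Or.inr (hx l' hl')

theorem notMem_convexHull_range_update_of_mem_convexHull_insert_midpoint {E ι : Type*}
    [AddCommGroup E] [Module ℝ E] [DecidableEq ι] {s : Set E} (hs : Convex ℝ s) {x : ι → E}
    {k : ι} (hx : ∀ l ≠ k, x l ∈ s) (hxk : x k ∉ s) {a p : E} (ha : a ∈ s)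
    (hp : p ∈ convexHull ℝ (insert (midpoint ℝ a (x k)) s)) :
    x k ∉ convexHull ℝ (range (update x k p)) := fun h =>
  notMem_convexHull_insert_midpoint hs ha hxk <| convexHull_min
    ((range_update_subset_insert hx p).trans
      (insert_subset hp ((subset_insert _ _).trans (subset_convexHull ℝ _))))
    (convex_convexHull ℝ _) h

def integerLattice (d : ℕ) : Set (Fin d → ℝ) := {p | ∀ j, ∃ m : ℤ, p j = m}

section IntegerLattice

variable {d : ℕ} {ι : Type*}

theorem Bornology.IsBounded.finite_inter_integerLattice {s : Set (Fin d → ℝ)}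
    (hs : Bornology.IsBounded s) : (s ∩ integerLattice d).Finite := by
  refine (ZSpan.setFinite_inter (Pi.basisFun ℝ (Fin d)) hs).subset
    (inter_subset_inter_right _ fun p hp => ?_)
  rw [SetLike.mem_coe, Module.Basis.mem_span_iff_repr_mem]
  intro j
  obtain ⟨m, hm⟩ := hp j
  exact ⟨m, by simp [hm]⟩

theorem exists_ne_midpoint_mem_integerLattice [Fintype ι] (hcard : 2 ^ d < Fintype.card ι)
    {x : ι → Fin d → ℝ} (hx : ∀ l, x l ∈ integerLattice d) :
    ∃ i k, i ≠ k ∧ midpoint ℝ (x i) (x k) ∈ integerLattice d := by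
  choose m hm using hx
  obtain ⟨i, k, hik, hparity⟩ := Fintype.exists_ne_map_eq_of_card_lt
    (fun l j => decide (Even (m l j))) (by simpa using hcard)
  refine ⟨i, k, hik, fun j => ?_⟩
  obtain ⟨q, hq⟩ : Even (m i j + m k j) := Int.even_add.2 (by simpa using congrFun hparity j)
  refine ⟨q, ?_⟩
  rw [pi_midpoint_apply, midpoint_eq_smul_add, hm, hm]
  have hq' : (m i j : ℝ) + m k j = q + q := by exact_mod_cast hq
  rw [smul_eq_mul, invOf_eq_inv, hq']
  ring

theorem ncard_convexHull_range_update_inter_integerLattice_lt [Finite ι] [DecidableEq ι]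
    {x : ι → Fin d → ℝ} {l : ι} {p : Fin d → ℝ} (hxl : x l ∈ integerLattice d)
    (hp : p ∈ convexHull ℝ (range x)) (hxl' : x l ∉ convexHull ℝ (range (update x l p))) :
    (convexHull ℝ (range (update x l p)) ∩ integerLattice d).ncard <
      (convexHull ℝ (range x) ∩ integerLattice d).ncard := by
  have hsub : convexHull ℝ (range (update x l p)) ⊆ convexHull ℝ (range x) :=
    convexHull_min ((range_update_subset_insert (fun l' _ => subset_convexHull ℝ _
      (mem_range_self l')) p).trans (insert_subset hp Subset.rfl)) (convex_convexHull ℝ _)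
  refine ncard_lt_ncard ⟨inter_subset_inter_left _ hsub, fun h => hxl' (h ?_).1⟩
    ((finite_range x).isCompact_convexHull (𝕜 := ℝ)).isBounded.finite_inter_integerLattice
  exact ⟨subset_convexHull ℝ _ (mem_range_self l), hxl⟩

def IsLatticeSelection (C : ι → Set (Fin d → ℝ)) (x : ι → Fin d → ℝ) : Prop :=
  ∀ l, x l ∈ integerLattice d ∧ ∀ j, l ≠ j → x l ∈ C j

variable {C : ι → Set (Fin d → ℝ)} {x : ι → Fin d → ℝ}

theorem IsLatticeSelection.update [DecidableEq ι] (hx : IsLatticeSelection C x) {l : ι}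
    {p : Fin d → ℝ} (hp : p ∈ integerLattice d) (hpC : ∀ j, l ≠ j → p ∈ C j) :
    IsLatticeSelection C (update x l p) := by
  intro l'
  rcases eq_or_ne l' l with rfl | hl'
  · simpa using ⟨hp, hpC⟩
  · simpa [hl'] using hx l'

theorem IsLatticeSelection.update_midpoint [DecidableEq ι] (hC : ∀ j, Convex ℝ (C j))
    (hx : IsLatticeSelection C x) {i k : ι} (hy : midpoint ℝ (x i) (x k) ∈ integerLattice d) :
    IsLatticeSelection
      (Function.update C i
        (convexHull ℝ (range x) ∩ convexHull ℝ (insert (midpoint ℝ (x i) (x k)) (C i))))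
      (Function.update x k (midpoint ℝ (x i) (x k))) := by
  refine IsLatticeSelection.update (fun l => ⟨(hx l).1, fun j hlj => ?_⟩) hy fun j hkj => ?_
  · rcases eq_or_ne j i with rfl | hji
    · simpa using ⟨subset_convexHull ℝ _ (mem_range_self l),
        subset_convexHull ℝ _ (mem_insert_of_mem _ ((hx l).2 j hlj))⟩
    · simpa [hji] using (hx l).2 j hlj
  · rcases eq_or_ne j i with rfl | hji
    · simpa using ⟨(convex_convexHull ℝ _).midpoint_mem (subset_convexHull ℝ _ (mem_range_self j))
        (subset_convexHull ℝ _ (mem_range_self k)), subset_convexHull ℝ _ (mem_insert _ _)⟩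
    · simpa [hji] using (hC j).midpoint_mem ((hx i).2 j (Ne.symm hji)) ((hx k).2 j hkj)

theorem IsLatticeSelection.exists_mem_integerLattice_forall_mem [Fintype ι]
    (hcard : 2 ^ d < Fintype.card ι) (hC : ∀ i, Convex ℝ (C i)) (hx : IsLatticeSelection C x) :
    ∃ p ∈ integerLattice d, ∀ i, p ∈ C i := by
  classical
  induction hN : (convexHull ℝ (range x) ∩ integerLattice d).ncard using Nat.strong_induction_on
    generalizing C x with
  | _ N ih =>
  by_cases hfix : ∃ l, x l ∈ C l
  · obtain ⟨l, hl⟩ := hfix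
    exact ⟨x l, (hx l).1, fun j => (eq_or_ne l j).elim (· ▸ hl) ((hx l).2 j)⟩
  push Not at hfix
  obtain ⟨i, k, hik, hyL⟩ := exists_ne_midpoint_mem_integerLattice hcard (fun l => (hx l).1)
  set y := midpoint ℝ (x i) (x k)
  set S := convexHull ℝ (range x) ∩ convexHull ℝ (insert y (C i))
  have hyK : y ∈ convexHull ℝ (range x) := (convex_convexHull ℝ _).midpoint_mem
    (subset_convexHull ℝ _ (mem_range_self i)) (subset_convexHull ℝ _ (mem_range_self k))
  have hC' : ∀ j, Convex ℝ (Function.update C i S j) := by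
    intro j
    rcases eq_or_ne j i with rfl | hji
    · simpa using (convex_convexHull ℝ _).inter (convex_convexHull ℝ _)
    · simpa [hji] using hC j
  have hxk : x k ∉ convexHull ℝ (range (Function.update x k y)) :=
    notMem_convexHull_range_update_of_mem_convexHull_insert_midpoint (hC k)
      (fun l hl => (hx l).2 k hl) (hfix k) ((hx i).2 k hik) (subset_convexHull ℝ _ (mem_insert _ _))
  obtain ⟨z, hzL, hz⟩ := ih _ (hN ▸ ncard_convexHull_range_update_inter_integerLattice_lt
    (hx k).1 hyK hxk) hC' (hx.update_midpoint hC hyL) rfl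
  have hzS : z ∈ S := by simpa using hz i
  have hx'' : IsLatticeSelection C (Function.update x i z) :=
    hx.update hzL fun j hij => by simpa [hij.symm] using hz j
  have hxi : x i ∉ convexHull ℝ (range (Function.update x i z)) :=
    notMem_convexHull_range_update_of_mem_convexHull_insert_midpoint (hC i)
      (fun l hl => (hx l).2 i hl) (hfix i) ((hx k).2 i hik.symm)
      (midpoint_comm (R := ℝ) (x i) (x k) ▸ hzS.2)
  exact ih _ (hN ▸ ncard_convexHull_range_update_inter_integerLattice_lt (hx i).1 hzS.1 hxi)
    hC hx'' rfl

end IntegerLattice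

theorem doignon_general {d : ℕ} {ι : Type*} [Fintype ι]
    (F : ι → Set (Fin d → ℝ)) (hconv : ∀ i, Convex ℝ (F i))
    (hhelly : ∀ P : Finset ι, P.card ≤ 2 ^ d →
      ∃ x : Fin d → ℝ, (∀ j, ∃ m : ℤ, x j = (m : ℝ)) ∧ ∀ i ∈ P, x ∈ F i) :
    ∃ x : Fin d → ℝ, (∀ j, ∃ m : ℤ, x j = (m : ℝ)) ∧ ∀ i, x ∈ F i := by
  classical
  suffices h : ∀ P : Finset ι, ∃ x ∈ integerLattice d, ∀ i ∈ P, x ∈ F i by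
    obtain ⟨x, hx, hxF⟩ := h Finset.univ
    exact ⟨x, hx, fun i => hxF i (Finset.mem_univ i)⟩
  intro P
  induction P using Finset.strongInduction with
  | H P ih =>
  by_cases hP : P.card ≤ 2 ^ d
  · exact hhelly P hP
  choose x hxL hxF using fun i : P => ih (P.erase i) (Finset.erase_ssubset i.2)
  have hx : IsLatticeSelection (fun i : P => F i) x := fun l =>
    ⟨hxL l, fun j hlj => hxF l j (Finset.mem_erase.2 ⟨Subtype.coe_ne_coe.2 hlj.symm, j.2⟩)⟩
  obtain ⟨p, hpL, hpF⟩ :=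
    hx.exists_mem_integerLattice_forall_mem (by simpa using not_le.1 hP) (fun i : P => hconv i)
  exact ⟨p, hpL, fun i hi => hpF ⟨i, hi⟩⟩

/-- Doignon's theorem: if every subfamily of at most `2^d` members of a finite family
of convex sets in `ℝ^d` has a common point in the integer lattice `ℤ^d`, then the whole
family has a common point in `ℤ^d`. -/
theorem doignon {d : ℕ} (hd : 1 ≤ d) {ι : Type*} [Fintype ι]
    (F : ι → Set (Fin d → ℝ)) (hconv : ∀ i, Convex ℝ (F i))
    (hhelly : ∀ P : Finset ι, P.card ≤ 2 ^ d →
      ∃ x : Fin d → ℝ, (∀ j, ∃ m : ℤ, x j = (m : ℝ)) ∧ ∀ i ∈ P, x ∈ F i) :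
    ∃ x : Fin d → ℝ, (∀ j, ∃ m : ℤ, x j = (m : ℝ)) ∧ ∀ i, x ∈ F i :=
  doignon_general F hconv hhelly
end
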